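/- arXiv:2206.00657 — 5 statements merged into one kernel-verified Lean document; each statement's English description precedes it below -/
import Mathlib

section
/- Let F be a cumulative distribution function, c > 0, and suppose p ≤ F(x+c) - F(x) for some real x. Let η(v) be i.i.d. random variables with distribution F indexed by vertices of a directed acyclic graph G with source v₀, and define ω(v) = η(v) + c·d(v) where d(v) is the distance from v₀. Define ν(v) = 1 if x < η(v) ≤ x + c and 0 otherwise. Then every path v₀ → v₁ → ⋯ → v_k in G with ν(v_i) = 1 for all i (an open path) satisfies ω(v_{i+1}) > ω(v_i) for all i (is accessible). Consequently the probability that a given set of paths contains an accessible path for ω is at least the probability it contains an open path for the Bernoulli process ν. -/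
open MeasureTheory

/-- coupling between the RMF model and a Bernoulli site process.
`G` is a DAG with vertex set `V`, edge relation `E` and distance-to-source `d`
(edges go from distance `d` to distance `d+1`).  Given a CDF `F`, `c > 0` and
`p ≤ F(x+c) - F x`, every path all of whose vertices `v` satisfy
`x < η v ≤ x + c` (i.e. is open for `ν`) is accessible for
`ω v = η v + c * d v`; consequently for any probability measure `μ` on the
fitness configurations, the probability that some path of a given family `Ps`
is accessible is at least the probability that some path of `Ps` is open. -/
theorem stmt0 {V : Type*} [MeasurableSpace V]
    (E : V → V → Prop) (d : V → ℕ)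
    (hE : ∀ u v : V, E u v → d v = d u + 1)
    (F : ℝ → ℝ) (hF : Monotone F) (c : ℝ) (hc : 0 < c)
    (p x : ℝ) (hp : p ≤ F (x + c) - F x)
    (μ : Measure (V → ℝ)) [IsProbabilityMeasure μ]
    (Ps : Set (List V)) (hpath : ∀ P ∈ Ps, P.Chain' E) :
    (∀ η : V → ℝ, ∀ P ∈ Ps,
        (∀ v ∈ P, x < η v ∧ η v ≤ x + c) →
        P.Chain' (fun u w => η u + c * d u < η w + c * d w)) ∧
    μ {η : V → ℝ | ∃ P ∈ Ps, ∀ v ∈ P, x < η v ∧ η v ≤ x + c} ≤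
      μ {η : V → ℝ | ∃ P ∈ Ps,
          P.Chain' (fun u w => η u + c * d u < η w + c * d w)} := by
  have key : ∀ η : V → ℝ, ∀ P : List V, P.Chain' E →
      (∀ v ∈ P, x < η v ∧ η v ≤ x + c) →
      P.Chain' (fun u w => η u + c * d u < η w + c * d w) := by
    intro η P
    induction P with
    | nil => simp [List.Chain']
    | cons a l ih =>
      cases l with
      | nil => simp [List.Chain']
      | cons b l' =>
        intro hP hν
        simp only [List.Chain', List.isChain_cons_cons] at hP ⊢
        refine ⟨?_, ih hP.2 (fun v hv => hν v (List.mem_cons_of_mem _ hv))⟩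
        have hd := hE a b hP.1
        have h1 := (hν a (by simp)).2
        have h2 := (hν b (by simp)).1
        rw [hd]; push_cast; nlinarith
  refine ⟨fun η P hP => key η P (hpath P hP), ?_⟩
  apply measure_mono
  rintro η ⟨P, hP, hν⟩
  exact ⟨P, hP, key η P (hpath P hP) hν⟩
end

section
/- Consider the n-ary tree of fixed height h with a Bernoulli site process in which the root is present and every other vertex is present independently with probability p_n. Let Y be the number of fully present root-to-leaf paths and μ = n^h p_n^h. If n·p_n → ∞ as n → ∞, then Var(Y) = o(μ²). -/
open MeasureTheory

/-- The non-root vertices of the `n`-ary tree of height `h`: the vertex at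
depth `j+1` (for `j : Fin h`) lying on the path determined by a word is a word
of length `j+1` over `Fin n`. -/
def TreeVertex (n h : ℕ) : Type := Σ j : Fin h, (Fin (j.1 + 1) → Fin n)

instance (n h : ℕ) : Fintype (TreeVertex n h) :=
  inferInstanceAs (Fintype (Σ j : Fin h, (Fin (j.1 + 1) → Fin n)))

/-- The Bernoulli site process on the non-root vertices of the `n`-ary tree of
height `h`: each non-root vertex is present (`true`) independently with
probability `p` (the root is always present). -/
noncomputable def treeMeasure (n h : ℕ) (p : ENNReal) (hp : p ≤ 1) :
    Measure (TreeVertex n h → Bool) :=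
  Measure.pi fun _ => (PMF.ofFintype (fun b => cond b p (1 - p)) (by simp [hp])).toMeasure

/-- The number of root-to-leaf paths (identified with words `w : Fin h → Fin n`,
the path visiting the prefixes of `w`) all of whose vertices are present in
the configuration `η`. -/
noncomputable def treeCount (n h : ℕ) (η : TreeVertex n h → Bool) : ℕ :=
  Nat.card {w : Fin h → Fin n //
    ∀ j : Fin h, η ⟨j, fun i => w (Fin.castLE j.isLt i)⟩ = true}


namespace S5

instance (n h : ℕ) : DecidableEq (TreeVertex n h) :=
  inferInstanceAs (DecidableEq (Σ j : Fin h, (Fin (j.1 + 1) → Fin n)))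

variable {n h : ℕ}

/-- The vertex at depth `j+1` on the path `w`. -/
def pathV (w : Fin h → Fin n) (j : Fin h) : TreeVertex n h :=
  ⟨j, fun i => w (Fin.castLE j.isLt i)⟩

lemma pathV_inj (w : Fin h → Fin n) : Function.Injective (pathV w) := by
  intro j j' e
  exact congrArg Sigma.fst e

lemma pathV_eq_iff (w w' : Fin h → Fin n) (j : Fin h) :
    pathV w j = pathV w' j ↔ ∀ i : Fin h, i ≤ j → w i = w' i := by
  unfold pathV
  refine (Sigma.mk.inj_iff (β := fun j : Fin h => Fin (j.1 + 1) → Fin n)).trans ?_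
  simp only [heq_eq_eq, true_and]
  constructor
  · intro e i hi
    have := congrFun e ⟨i.1, Nat.lt_succ_of_le hi⟩
    simpa [Fin.castLE, Fin.ext_iff] using this
  · intro hw
    funext i
    exact hw (Fin.castLE j.isLt i) (by simpa [Fin.le_def] using Nat.lt_succ_iff.mp i.isLt)

/-- set of vertices of the path `w`. -/
def pathS (w : Fin h → Fin n) : Finset (TreeVertex n h) :=
  Finset.univ.image (pathV w)

lemma card_pathS (w : Fin h → Fin n) : (pathS w).card = h := by
  rw [pathS, Finset.card_image_of_injective _ (pathV_inj w)]
  simp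

/-- set of depths where paths agree. -/
def agree (w w' : Fin h → Fin n) : Finset (Fin h) :=
  Finset.univ.filter (fun j => pathV w j = pathV w' j)

lemma agree_card_le (w w' : Fin h → Fin n) : (agree w w').card ≤ h := by
  simpa [agree] using Finset.card_filter_le Finset.univ (fun j => pathV w j = pathV w' j)

lemma agree_down {w w' : Fin h → Fin n} {j j' : Fin h} (hj : j' ≤ j)
    (hJ : j ∈ agree w w') : j' ∈ agree w w' := by
  simp only [agree, Finset.mem_filter, Finset.mem_univ, true_and] at *
  rw [pathV_eq_iff] at *
  exact fun i hi => hJ i (le_trans hi hj)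

lemma inter_pathS (w w' : Fin h → Fin n) :
    pathS w ∩ pathS w' = (agree w w').image (pathV w) := by
  ext v
  simp only [Finset.mem_inter, pathS, agree, Finset.mem_image, Finset.mem_univ, true_and,
    Finset.mem_filter]
  constructor
  · rintro ⟨⟨j, rfl⟩, j', hj'⟩
    obtain rfl : j' = j := congrArg Sigma.fst hj'
    exact ⟨_, hj'.symm, rfl⟩
  · rintro ⟨j, hj, rfl⟩
    exact ⟨⟨j, rfl⟩, ⟨j, hj.symm⟩⟩

lemma card_inter_pathS (w w' : Fin h → Fin n) :
    (pathS w ∩ pathS w').card = (agree w w').card := by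
  rw [inter_pathS, Finset.card_image_of_injective _ (pathV_inj w)]

lemma card_union_pathS (w w' : Fin h → Fin n) :
    (pathS w ∪ pathS w').card = 2 * h - (agree w w').card := by
  have := Finset.card_union_add_card_inter (pathS w) (pathS w')
  rw [card_pathS, card_pathS, card_inter_pathS] at this
  omega

/-- `(agree w w').card ≥ m+1` iff the paths agree at depth `m`. -/
lemma agree_card_iff (w w' : Fin h → Fin n) {m : ℕ} (hm : m < h) :
    m + 1 ≤ (agree w w').card ↔ (⟨m, hm⟩ : Fin h) ∈ agree w w' := by
  constructor
  · intro hc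
    by_contra hmem
    have hsub : agree w w' ⊆ Finset.Iio ⟨m, hm⟩ := by
      intro j hj
      simp only [Finset.mem_Iio]
      by_contra hlt
      exact hmem (agree_down (not_lt.mp hlt) hj)
    have := Finset.card_le_card hsub
    rw [Fin.card_Iio] at this
    simp only [Fin.val_mk] at this
    omega
  · intro hmem
    have hsub : Finset.Iic (⟨m, hm⟩ : Fin h) ⊆ agree w w' := by
      intro j hj
      exact agree_down (Finset.mem_Iic.mp hj) hmem
    have := Finset.card_le_card hsub
    rwa [Fin.card_Iic] at this

/-- cylinder event. -/
def cyl (S : Finset (TreeVertex n h)) : Set (TreeVertex n h → Bool) :=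
  {η | ∀ v ∈ S, η v = true}

lemma cyl_eq_pi (S : Finset (TreeVertex n h)) :
    cyl S = Set.univ.pi (fun v => if v ∈ S then ({true} : Set Bool) else Set.univ) := by
  ext η
  simp only [cyl, Set.mem_setOf_eq, Set.mem_pi, Set.mem_univ, true_implies]
  refine forall_congr' fun v => ?_
  by_cases hv : v ∈ S <;> simp [hv]

lemma measurableSet_cyl (S : Finset (TreeVertex n h)) : MeasurableSet (cyl S) := by
  rw [cyl_eq_pi]
  refine MeasurableSet.univ_pi fun v => ?_
  split <;> simp

lemma cyl_inter (S T : Finset (TreeVertex n h)) : cyl S ∩ cyl T = cyl (S ∪ T) := by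
  ext η
  simp only [cyl, Set.mem_inter_iff, Set.mem_setOf_eq, Finset.mem_union]
  constructor
  · rintro ⟨h1, h2⟩ v (hv | hv)
    · exact h1 v hv
    · exact h2 v hv
  · intro hs
    exact ⟨fun v hv => hs v (Or.inl hv), fun v hv => hs v (Or.inr hv)⟩

variable (p : ENNReal) (hp : p ≤ 1)

instance : IsProbabilityMeasure (treeMeasure n h p hp) := by
  unfold treeMeasure; infer_instance

lemma measure_cyl (S : Finset (TreeVertex n h)) :
    treeMeasure n h p hp (cyl S) = p ^ S.card := by
  rw [treeMeasure, cyl_eq_pi, Measure.pi_pi]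
  have : ∀ v : TreeVertex n h,
      (PMF.ofFintype (fun b => cond b p (1 - p)) (by simp [hp])).toMeasure (if v ∈ S then ({true} : Set Bool) else Set.univ)
        = if v ∈ S then p else 1 := by
    intro v
    split
    · rw [PMF.toMeasure_apply_singleton _ _ (measurableSet_singleton _)]
      simp [PMF.ofFintype_apply]
    · simpa using add_tsub_cancel_of_le hp
  rw [Finset.prod_congr rfl fun v _ => this v]
  rw [Finset.prod_ite_mem, Finset.univ_inter, Finset.prod_const]

/-- indicator of a cylinder. -/
noncomputable def ind (S : Finset (TreeVertex n h)) : (TreeVertex n h → Bool) → ℝ :=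
  (cyl S).indicator 1

lemma integrable_ind (S : Finset (TreeVertex n h)) :
    Integrable (ind S) (treeMeasure n h p hp) := by
  rw [ind, integrable_indicator_iff (measurableSet_cyl S)]
  exact integrableOn_const (measure_ne_top _ _)

lemma integral_ind (S : Finset (TreeVertex n h)) :
    ∫ η, ind S η ∂(treeMeasure n h p hp) = (p.toReal) ^ S.card := by
  rw [ind, integral_indicator_one (measurableSet_cyl S), measureReal_def, measure_cyl p hp,
    ENNReal.toReal_pow]

lemma ind_mul (S T : Finset (TreeVertex n h)) (η : TreeVertex n h → Bool) :
    ind S η * ind T η = ind (S ∪ T) η := by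
  rw [ind, ind, ind, ← cyl_inter, Set.inter_indicator_one]
  rfl

lemma treeCount_eq (η : TreeVertex n h → Bool) :
    (treeCount n h η : ℝ) = ∑ w : Fin h → Fin n, ind (pathS w) η := by
  classical
  have hmem : ∀ w : Fin h → Fin n, η ∈ cyl (pathS w) ↔
      ∀ j : Fin h, η ⟨j, fun i => w (Fin.castLE j.isLt i)⟩ = true := by
    intro w
    simp only [cyl, Set.mem_setOf_eq, pathS, Finset.mem_image, Finset.mem_univ, true_and]
    constructor
    · intro hc j
      exact hc _ ⟨j, rfl⟩
    · rintro hc v ⟨j, rfl⟩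
      exact hc j
  have : ∀ w : Fin h → Fin n, ind (pathS w) η =
      if (∀ j : Fin h, η ⟨j, fun i => w (Fin.castLE j.isLt i)⟩ = true) then (1:ℝ) else 0 := by
    intro w
    rw [ind, Set.indicator_apply]
    simp [hmem w]
  rw [Finset.sum_congr rfl fun w _ => this w, Finset.sum_boole]
  rw [treeCount, Nat.card_eq_fintype_card, Fintype.card_subtype]


lemma integral_Y :
    ∫ η, (treeCount n h η : ℝ) ∂(treeMeasure n h p hp)
      = (n : ℝ) ^ h * p.toReal ^ h := by
  calc ∫ η, (treeCount n h η : ℝ) ∂(treeMeasure n h p hp)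
      = ∫ η, ∑ w : Fin h → Fin n, ind (pathS w) η ∂(treeMeasure n h p hp) := by
        exact integral_congr_ae (Filter.Eventually.of_forall fun η => treeCount_eq η)
    _ = ∑ w : Fin h → Fin n, ∫ η, ind (pathS w) η ∂(treeMeasure n h p hp) :=
        integral_finset_sum _ (fun w _ => integrable_ind p hp _)
    _ = ∑ _w : Fin h → Fin n, p.toReal ^ h := by
        refine Finset.sum_congr rfl fun w _ => ?_
        rw [integral_ind, card_pathS]
    _ = (n : ℝ) ^ h * p.toReal ^ h := by
        rw [Finset.sum_const, Finset.card_univ, nsmul_eq_mul]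
        simp only [Fintype.card_fun, Fintype.card_fin]
        push_cast
        ring

lemma integrable_Y : Integrable (fun η => (treeCount n h η : ℝ)) (treeMeasure n h p hp) := by
  refine (integrable_finset_sum Finset.univ fun w _ =>
    integrable_ind p hp (pathS w)).congr ?_
  exact Filter.Eventually.of_forall fun η => (treeCount_eq η).symm

lemma sq_treeCount (η : TreeVertex n h → Bool) :
    (treeCount n h η : ℝ) ^ 2
      = ∑ w : Fin h → Fin n, ∑ w' : Fin h → Fin n, ind (pathS w ∪ pathS w') η := by
  rw [treeCount_eq, sq, Finset.sum_mul_sum]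
  exact Finset.sum_congr rfl fun w _ => Finset.sum_congr rfl fun w' _ => ind_mul _ _ η

lemma integrable_Y2 :
    Integrable (fun η => (treeCount n h η : ℝ) ^ 2) (treeMeasure n h p hp) := by
  refine (integrable_finset_sum Finset.univ fun w _ =>
    integrable_finset_sum Finset.univ fun w' _ =>
      integrable_ind p hp (pathS w ∪ pathS w')).congr ?_
  exact Filter.Eventually.of_forall fun η => (sq_treeCount η).symm

lemma integral_Y2 :
    ∫ η, (treeCount n h η : ℝ) ^ 2 ∂(treeMeasure n h p hp)
      = ∑ w : Fin h → Fin n, ∑ w' : Fin h → Fin n,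
          p.toReal ^ (2 * h - (agree w w').card) := by
  calc ∫ η, (treeCount n h η : ℝ) ^ 2 ∂(treeMeasure n h p hp)
      = ∫ η, ∑ w : Fin h → Fin n, ∑ w' : Fin h → Fin n,
          ind (pathS w ∪ pathS w') η ∂(treeMeasure n h p hp) :=
        integral_congr_ae (Filter.Eventually.of_forall fun η => sq_treeCount η)
    _ = ∑ w : Fin h → Fin n, ∑ w' : Fin h → Fin n,
          ∫ η, ind (pathS w ∪ pathS w') η ∂(treeMeasure n h p hp) := by
        rw [integral_finset_sum _ (fun w _ => integrable_finset_sum _ fun w' _ =>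
          integrable_ind p hp _)]
        exact Finset.sum_congr rfl fun w _ =>
          integral_finset_sum _ (fun w' _ => integrable_ind p hp _)
    _ = _ := by
        refine Finset.sum_congr rfl fun w _ => Finset.sum_congr rfl fun w' _ => ?_
        rw [integral_ind, card_union_pathS]

lemma variance_eq :
    ∫ η, ((treeCount n h η : ℝ) - (n : ℝ) ^ h * p.toReal ^ h) ^ 2 ∂(treeMeasure n h p hp)
      = (∑ w : Fin h → Fin n, ∑ w' : Fin h → Fin n,
          p.toReal ^ (2 * h - (agree w w').card)) - ((n : ℝ) ^ h * p.toReal ^ h) ^ 2 := by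
  set m := (n : ℝ) ^ h * p.toReal ^ h with hm
  have hY := integrable_Y p hp (n := n) (h := h)
  have hY2 := integrable_Y2 p hp (n := n) (h := h)
  have hfe : (fun η => ((treeCount n h η : ℝ) - m) ^ 2)
      = fun η => ((treeCount n h η : ℝ) ^ 2 - (2 * m) * (treeCount n h η : ℝ) + m ^ 2) := by
    funext η; ring
  have I1 : Integrable (fun η => (treeCount n h η : ℝ) ^ 2 - 2 * m * (treeCount n h η : ℝ))
      (treeMeasure n h p hp) := hY2.sub (hY.const_mul _)
  have I2 : Integrable (fun η => 2 * m * (treeCount n h η : ℝ)) (treeMeasure n h p hp) :=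
    hY.const_mul _
  rw [hfe, integral_add I1 (integrable_const _), integral_sub hY2 I2,
    integral_const_mul, integral_Y, integral_const, integral_Y2]
  simp only [probReal_univ, measure_univ, ENNReal.toReal_one, smul_eq_mul, one_mul, ← hm]
  ring

lemma count_agreeAt {m : ℕ} (hm : m < h) (w : Fin h → Fin n) :
    (Finset.univ.filter (fun w' : Fin h → Fin n =>
        ∀ i : Fin h, i.1 ≤ m → w i = w' i)).card = n ^ (h - (m + 1)) := by
  classical
  rw [← Fintype.card_subtype]
  rw [Fintype.card_congr (Equiv.subtypePiEquivPi (p := fun (i : Fin h) (b : Fin n) =>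
    i.1 ≤ m → w i = b))]
  rw [Fintype.card_pi]
  have hcard : ∀ i : Fin h, Fintype.card {b : Fin n // i.1 ≤ m → w i = b}
      = if i.1 ≤ m then 1 else n := by
    intro i
    by_cases hi : i.1 ≤ m
    · simp only [hi, if_true]
      simp [hi]
    · simp only [hi, if_false]
      rw [Fintype.card_subtype]
      simp [hi]
  rw [Finset.prod_congr rfl fun i _ => hcard i, Finset.prod_ite, Finset.prod_const,
    Finset.prod_const, one_pow, one_mul]
  congr 1
  have hfltr : (Finset.univ.filter fun i : Fin h => i.1 ≤ m) = Finset.Iic ⟨m, hm⟩ := by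
    ext i; simp [Fin.le_def]
  have hadd := Finset.card_filter_add_card_filter_not
    (s := (Finset.univ : Finset (Fin h))) (p := fun i : Fin h => i.1 ≤ m)
  rw [hfltr, Fin.card_Iic, Finset.card_univ, Fintype.card_fin] at hadd
  simp only [Fin.val_mk] at hadd
  omega

lemma count_pairs {m : ℕ} (hm : m < h) :
    ∑ w : Fin h → Fin n, ∑ w' : Fin h → Fin n,
        (if (∀ i : Fin h, i.1 ≤ m → w i = w' i) then (1 : ℝ) else 0)
      = (n : ℝ) ^ h * (n : ℝ) ^ (h - (m + 1)) := by
  classical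
  have hinner : ∀ w : Fin h → Fin n,
      ∑ w' : Fin h → Fin n, (if (∀ i : Fin h, i.1 ≤ m → w i = w' i) then (1 : ℝ) else 0)
        = (n : ℝ) ^ (h - (m + 1)) := by
    intro w
    rw [Finset.sum_boole, count_agreeAt hm w]
    push_cast
    ring
  rw [Finset.sum_congr rfl fun w _ => hinner w, Finset.sum_const, Finset.card_univ,
    nsmul_eq_mul]
  simp only [Fintype.card_fun, Fintype.card_fin]
  push_cast
  ring

lemma pair_bound {q : ℝ} (hq0 : 0 ≤ q) (w w' : Fin h → Fin n) :
    q ^ (2 * h - (agree w w').card) - q ^ (2 * h)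
      ≤ ∑ m ∈ Finset.range h,
          (if (∀ i : Fin h, i.1 ≤ m → w i = w' i) then q ^ (2 * h - (m + 1)) else 0) := by
  classical
  set a := (agree w w').card with ha
  have hah : a ≤ h := agree_card_le w w'
  have tele : q ^ (2 * h - a) - q ^ (2 * h)
      = ∑ m ∈ Finset.range a, (q ^ (2 * h - (m + 1)) - q ^ (2 * h - m)) := by
    have := Finset.sum_range_sub (f := fun m => q ^ (2 * h - m)) a
    simp only [Nat.sub_zero] at this
    rw [this]
  rw [tele]
  have step1 : ∑ m ∈ Finset.range a, (q ^ (2 * h - (m + 1)) - q ^ (2 * h - m))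
      ≤ ∑ m ∈ Finset.range a, q ^ (2 * h - (m + 1)) :=
    Finset.sum_le_sum fun m _ => sub_le_self _ (pow_nonneg hq0 _)
  refine le_trans step1 ?_
  have step2 : ∑ m ∈ Finset.range a, q ^ (2 * h - (m + 1))
      = ∑ m ∈ Finset.range h, (if m < a then q ^ (2 * h - (m + 1)) else 0) := by
    rw [← Finset.sum_filter]
    congr 1
    ext x
    simp only [Finset.mem_filter, Finset.mem_range]
    omega
  rw [step2]
  refine Finset.sum_le_sum fun m hmr => ?_
  have hm : m < h := Finset.mem_range.mp hmr
  have hiff : m < a ↔ (∀ i : Fin h, i.1 ≤ m → w i = w' i) := by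
    rw [show m < a ↔ m + 1 ≤ a from Iff.rfl, ha, agree_card_iff w w' hm]
    simp only [agree, Finset.mem_filter, Finset.mem_univ, true_and, pathV_eq_iff]
    constructor
    · intro hall i hi
      exact hall i (by simpa [Fin.le_def] using hi)
    · intro hall i hi
      exact hall i (by simpa [Fin.le_def] using hi)
  rw [if_congr hiff rfl rfl]

lemma main_bound :
    ∫ η, ((treeCount n h η : ℝ) - (n : ℝ) ^ h * p.toReal ^ h) ^ 2 ∂(treeMeasure n h p hp)
      ≤ ∑ m ∈ Finset.range h, ((n : ℝ) * p.toReal) ^ (2 * h - (m + 1)) := by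
  classical
  rw [variance_eq]
  set q := p.toReal with hq
  have hq0 : (0:ℝ) ≤ q := ENNReal.toReal_nonneg
  have hμ : ((n : ℝ) ^ h * q ^ h) ^ 2
      = ∑ _w : Fin h → Fin n, ∑ _w' : Fin h → Fin n, q ^ (2 * h) := by
    rw [Finset.sum_const, Finset.sum_const, Finset.card_univ, nsmul_eq_mul, nsmul_eq_mul]
    simp only [Fintype.card_fun, Fintype.card_fin]
    push_cast
    rw [two_mul, pow_add]
    ring
  rw [hμ, ← Finset.sum_sub_distrib]
  simp_rw [← Finset.sum_sub_distrib]
  have step1 : ∑ w : Fin h → Fin n, ∑ w' : Fin h → Fin n,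
        (q ^ (2 * h - (agree w w').card) - q ^ (2 * h))
      ≤ ∑ w : Fin h → Fin n, ∑ w' : Fin h → Fin n, ∑ m ∈ Finset.range h,
          (if (∀ i : Fin h, i.1 ≤ m → w i = w' i) then q ^ (2 * h - (m + 1)) else 0) :=
    Finset.sum_le_sum fun w _ => Finset.sum_le_sum fun w' _ => pair_bound hq0 w w'
  refine le_trans step1 ?_
  have swap : (∑ w : Fin h → Fin n, ∑ w' : Fin h → Fin n, ∑ m ∈ Finset.range h,
        (if (∀ i : Fin h, i.1 ≤ m → w i = w' i) then q ^ (2 * h - (m + 1)) else 0))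
      = ∑ m ∈ Finset.range h, ∑ w : Fin h → Fin n, ∑ w' : Fin h → Fin n,
        (if (∀ i : Fin h, i.1 ≤ m → w i = w' i) then q ^ (2 * h - (m + 1)) else 0) := by
    rw [show (∑ w : Fin h → Fin n, ∑ w' : Fin h → Fin n, ∑ m ∈ Finset.range h,
        (if (∀ i : Fin h, i.1 ≤ m → w i = w' i) then q ^ (2 * h - (m + 1)) else 0))
      = ∑ w : Fin h → Fin n, ∑ m ∈ Finset.range h, ∑ w' : Fin h → Fin n,
        (if (∀ i : Fin h, i.1 ≤ m → w i = w' i) then q ^ (2 * h - (m + 1)) else 0) from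
      Finset.sum_congr rfl fun w _ => Finset.sum_comm]
    exact Finset.sum_comm
  rw [swap]
  refine le_of_eq (Finset.sum_congr rfl fun m hmr => ?_)
  have hm : m < h := Finset.mem_range.mp hmr
  have hfact : ∀ w w' : Fin h → Fin n,
      (if (∀ i : Fin h, i.1 ≤ m → w i = w' i) then q ^ (2 * h - (m + 1)) else 0)
        = q ^ (2 * h - (m + 1)) * (if (∀ i : Fin h, i.1 ≤ m → w i = w' i) then (1:ℝ) else 0) := by
    intro w w'; split <;> simp
  calc ∑ w : Fin h → Fin n, ∑ w' : Fin h → Fin n,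
        (if (∀ i : Fin h, i.1 ≤ m → w i = w' i) then q ^ (2 * h - (m + 1)) else 0)
      = q ^ (2 * h - (m + 1)) * ∑ w : Fin h → Fin n, ∑ w' : Fin h → Fin n,
        (if (∀ i : Fin h, i.1 ≤ m → w i = w' i) then (1:ℝ) else 0) := by
        rw [Finset.mul_sum]
        exact Finset.sum_congr rfl fun w _ => by
          rw [Finset.mul_sum]
          exact Finset.sum_congr rfl fun w' _ => hfact w w'
    _ = q ^ (2 * h - (m + 1)) * ((n : ℝ) ^ h * (n : ℝ) ^ (h - (m + 1))) := by
        rw [count_pairs hm]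
    _ = ((n : ℝ) * q) ^ (2 * h - (m + 1)) := by
        rw [mul_pow, ← pow_add]
        have : h + (h - (m + 1)) = 2 * h - (m + 1) := by omega
        rw [this]
        ring

end S5


/-- in the `n`-ary tree of fixed height `h` with the root present
and every other vertex present independently with probability `p n`, if
`n * p n → ∞`, then the variance of the number `Y` of fully present
root-to-leaf paths is `o(μ²)`, where `μ = n ^ h * (p n) ^ h = E[Y]`. -/
theorem stmt5 (h : ℕ) (p : ℕ → ENNReal) (hp : ∀ n, p n ≤ 1)
    (hnp : Filter.Tendsto (fun n : ℕ => (n : ℝ) * (p n).toReal)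
      Filter.atTop Filter.atTop) :
    (fun n : ℕ =>
        ∫ η, ((treeCount n h η : ℝ) - (n : ℝ) ^ h * (p n).toReal ^ h) ^ 2
          ∂(treeMeasure n h (p n) (hp n)))
      =o[Filter.atTop] fun n : ℕ => ((n : ℝ) ^ h * (p n).toReal ^ h) ^ 2 := by
  rw [Asymptotics.isLittleO_iff]
  intro c hc
  filter_upwards [hnp.eventually_ge_atTop (max 1 ((h : ℝ) / c))] with N hN
  set q := (p N).toReal with hq
  set x := (N : ℝ) * q with hx
  have hx1 : (1 : ℝ) ≤ x := le_trans (le_max_left _ _) hN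
  have hx0 : (0 : ℝ) ≤ x := le_trans zero_le_one hx1
  have hhc : (h : ℝ) ≤ c * x := by
    have h2 := le_trans (le_max_right _ _) hN
    rw [div_le_iff₀ hc] at h2
    linarith
  have hvar_nonneg :
      0 ≤ ∫ η, ((treeCount N h η : ℝ) - (N : ℝ) ^ h * q ^ h) ^ 2
        ∂(treeMeasure N h (p N) (hp N)) :=
    integral_nonneg fun η => sq_nonneg _
  have hbound := S5.main_bound (n := N) (h := h) (p N) (hp N)
  have key : ∑ m ∈ Finset.range h, x ^ (2 * h - (m + 1)) ≤ c * x ^ (2 * h) := by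
    rcases Nat.eq_zero_or_pos h with hh | hh
    · subst hh
      simp only [Finset.range_zero, Finset.sum_empty]
      positivity
    · calc ∑ m ∈ Finset.range h, x ^ (2 * h - (m + 1))
          ≤ ∑ _m ∈ Finset.range h, x ^ (2 * h - 1) := by
            refine Finset.sum_le_sum fun m hmr => ?_
            have := Finset.mem_range.mp hmr
            exact pow_le_pow_right₀ hx1 (by omega)
        _ = (h : ℝ) * x ^ (2 * h - 1) := by
            rw [Finset.sum_const, Finset.card_range, nsmul_eq_mul]
        _ ≤ (c * x) * x ^ (2 * h - 1) :=
            mul_le_mul_of_nonneg_right hhc (pow_nonneg hx0 _)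
        _ = c * x ^ (2 * h) := by
            rw [mul_assoc, mul_comm x, ← pow_succ, show 2 * h - 1 + 1 = 2 * h from by omega]
  have hμ : ((N : ℝ) ^ h * q ^ h) ^ 2 = x ^ (2 * h) := by
    rw [hx, ← mul_pow, ← pow_mul, mul_comm h 2]
  rw [Real.norm_eq_abs, Real.norm_eq_abs, abs_of_nonneg hvar_nonneg,
    abs_of_nonneg (sq_nonneg _), hμ]
  exact le_trans hbound key
end

section
/- Consider the RMF model on the directed hypercube Q_n: assign ω(v) = η(v) + c_n·d(v) where η(v) are i.i.d. with arbitrary distribution F, d(v) is the number of ones in v, the vertex 0 is assigned fitness −∞ and the vertex 1 is assigned fitness +∞. If c_n > 0 and n·c_n → ∞ as n → ∞, then the probability that there exists a directed path from 0 to 1 along which ω is strictly increasing tends to 1 as n → ∞. -/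
open MeasureTheory

/-- A directed path from `0 = 0ⁿ` to `1 = 1ⁿ` in the directed `n`-dimensional
hypercube `Q_n`: a sequence of `n+1` vertices (binary strings, modelled as
`Fin n → Bool`) starting at the all-zeros string, ending at the all-ones
string, in which each step changes exactly one coordinate from `false` to
`true`. -/
def HypercubePath (n : ℕ) : Type :=
  {p : Fin (n + 1) → (Fin n → Bool) //
    (∀ j, p 0 j = false) ∧ (∀ j, p (Fin.last n) j = true) ∧
    ∀ i : Fin n, ∃ j : Fin n, p i.castSucc j = false ∧
      ∀ j' : Fin n, p i.succ j' = if j' = j then true else p i.castSucc j'}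

open Finset Filter

namespace Stmt15

lemma fact_pair_aux : ∀ b : ℕ, 2 ≤ b → ∀ N, b + b ≤ N →
    Nat.factorial b * Nat.factorial (N - b) ≤ 2 * Nat.factorial (N - 2) := by
  intro b hb
  induction b, hb using Nat.le_induction with
  | base =>
    intro N hN
    have : N - 2 = N - 2 := rfl
    simp [Nat.factorial]
  | succ b hb ih =>
    intro N hN
    have h1 : b + b ≤ N := by omega
    have h2 : N - b = (N - (b+1)) + 1 := by omega
    have key : Nat.factorial (b+1) * Nat.factorial (N - (b+1)) ≤
        Nat.factorial b * Nat.factorial (N - b) := by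
      rw [Nat.factorial_succ, h2, Nat.factorial_succ]
      have hle : b + 1 ≤ N - (b+1) + 1 := by omega
      calc (b+1) * Nat.factorial b * Nat.factorial (N - (b+1))
          = Nat.factorial b * ((b+1) * Nat.factorial (N - (b+1))) := by ring
        _ ≤ Nat.factorial b * ((N - (b+1) + 1) * Nat.factorial (N - (b+1))) := by
            exact Nat.mul_le_mul_left _ (Nat.mul_le_mul_right _ hle)
    exact key.trans (ih N h1)

lemma fact_pair_le {N b : ℕ} (h2 : 2 ≤ b) (hb : b + 2 ≤ N) :
    Nat.factorial b * Nat.factorial (N - b) ≤ 2 * Nat.factorial (N - 2) := by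
  rcases le_or_gt (b + b) N with h | h
  · exact fact_pair_aux b h2 N h
  · have h2' : 2 ≤ N - b := by omega
    have h' : (N - b) + (N - b) ≤ N := by omega
    have := fact_pair_aux (N - b) h2' N h'
    rwa [Nat.sub_sub_self (by omega : b ≤ N), mul_comm] at this

lemma SL (N : ℕ) : ∑ b ∈ Ico 1 N, Nat.factorial b * Nat.factorial (N - b)
    ≤ 4 * Nat.factorial (N - 1) := by
  match N with
  | 0 => simp
  | 1 => simp
  | 2 => simp [Nat.factorial]
  | (N+3) =>
    set M := N + 3 with hM
    have h1 : (1:ℕ) < M := by omega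
    have hsplit1 : ∑ b ∈ Ico 1 M, Nat.factorial b * Nat.factorial (M - b)
        = Nat.factorial 1 * Nat.factorial (M - 1)
          + ∑ b ∈ Ico 2 M, Nat.factorial b * Nat.factorial (M - b) := by
      rw [Finset.sum_eq_sum_Ico_succ_bot h1 (fun b => Nat.factorial b * Nat.factorial (M - b))]
    have h2 : (2:ℕ) ≤ M - 1 := by omega
    have hsplit2 : ∑ b ∈ Ico 2 M, Nat.factorial b * Nat.factorial (M - b)
        = (∑ b ∈ Ico 2 (M-1), Nat.factorial b * Nat.factorial (M - b))
          + Nat.factorial (M-1) * Nat.factorial (M - (M-1)) := by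
      have : M = (M-1) + 1 := by omega
      rw [this]
      rw [Finset.sum_Ico_succ_top (by omega)]
      congr 1
    have hmid : ∑ b ∈ Ico 2 (M-1), Nat.factorial b * Nat.factorial (M - b)
        ≤ (M - 3) * (2 * Nat.factorial (M - 2)) := by
      have := Finset.sum_le_card_nsmul (Ico 2 (M-1))
        (fun b => Nat.factorial b * Nat.factorial (M - b)) (2 * Nat.factorial (M-2))
        (fun b hb => by
          rw [Finset.mem_Ico] at hb
          exact fact_pair_le hb.1 (by omega))
      simpa [Nat.card_Ico, smul_eq_mul, Nat.sub_sub] using this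
    have hMM : M - (M - 1) = 1 := by omega
    rw [hsplit1, hsplit2, hMM]
    simp only [Nat.factorial_one, one_mul, mul_one]
    have hfin : (M - 3) * (2 * Nat.factorial (M - 2)) ≤ 2 * Nat.factorial (M-1) := by
      have hstep : Nat.factorial (M - 1) = (M - 2 + 1) * Nat.factorial (M-2) := by
        have : M - 1 = (M - 2) + 1 := by omega
        rw [this, Nat.factorial_succ]
      rw [hstep]
      calc (M - 3) * (2 * Nat.factorial (M - 2)) = 2 * ((M-3) * Nat.factorial (M-2)) := by ring
        _ ≤ 2 * ((M - 2 + 1) * Nat.factorial (M-2)) :=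
            Nat.mul_le_mul_left _ (Nat.mul_le_mul_right _ (by omega))
    omega

noncomputable def Fb (x : ℝ) (n : ℕ) : ℝ :=
  ∑ k ∈ range n, (4*x)^k * (Nat.factorial (n - k) : ℝ)

lemma Fb_nonneg {x : ℝ} (hx : 1 ≤ x) (n : ℕ) : 0 ≤ Fb x n := by
  apply Finset.sum_nonneg
  intro k _
  positivity

lemma Fb_rec {x : ℝ} (hx : 1 ≤ x) {n : ℕ} (hn : 1 ≤ n) :
    (Nat.factorial n : ℝ) + x * ∑ a ∈ Ico 1 n, (Nat.factorial (n - a) : ℝ) * Fb x a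
      ≤ Fb x n := by
  have hx0 : (0:ℝ) ≤ x := le_trans zero_le_one hx
  have key : x * ∑ a ∈ Ico 1 n, (Nat.factorial (n - a) : ℝ) * Fb x a
      ≤ ∑ k ∈ Ico 1 n, (4*x)^k * (Nat.factorial (n - k) : ℝ) := by
    rw [Finset.mul_sum]
    have expand : ∀ a ∈ Ico 1 n, x * ((Nat.factorial (n - a) : ℝ) * Fb x a)
        = ∑ k ∈ range a, (x * (4*x)^k) * ((Nat.factorial (n - a) : ℝ) * (Nat.factorial (a - k) : ℝ)) := by
      intro a _
      rw [Fb, Finset.mul_sum, Finset.mul_sum]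
      apply Finset.sum_congr rfl
      intro k _
      ring
    rw [Finset.sum_congr rfl expand]
    -- swap order of summation
    rw [Finset.sum_comm' (t' := range (n-1)) (s' := fun k => Ico (k+1) n)
      (by intro a k; simp only [Finset.mem_Ico, Finset.mem_range]; omega)]
    -- bound inner sums
    have inner : ∀ k ∈ range (n-1),
        ∑ a ∈ Ico (k+1) n, (x * (4*x)^k) * ((Nat.factorial (n - a) : ℝ) * (Nat.factorial (a - k) : ℝ))
        ≤ (4*x)^(k+1) * (Nat.factorial (n - (k+1)) : ℝ) := by
      intro k hk
      rw [Finset.mem_range] at hk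
      rw [← Finset.mul_sum]
      have hsum : ∑ a ∈ Ico (k+1) n, ((Nat.factorial (n - a) : ℝ) * (Nat.factorial (a - k) : ℝ))
          ≤ 4 * (Nat.factorial (n - k - 1) : ℝ) := by
        have hN : ∑ a ∈ Ico (k+1) n, (Nat.factorial (n - a) * Nat.factorial (a - k))
            = ∑ b ∈ Ico 1 (n - k), (Nat.factorial b * Nat.factorial ((n-k) - b)) := by
          rw [Finset.sum_Ico_eq_sum_range, Finset.sum_Ico_eq_sum_range]
          have : n - (k+1) = (n - k) - 1 := by omega
          rw [this]
          apply Finset.sum_congr rfl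
          intro i hi
          rw [Finset.mem_range] at hi
          have e1 : n - (k + 1 + i) = (n - k) - (1 + i) := by omega
          have e2 : (k + 1 + i) - k = 1 + i := by omega
          rw [e1, e2, mul_comm]
        have := SL (n - k)
        have h2 : (n - k) - 1 = n - k - 1 := rfl
        calc ∑ a ∈ Ico (k+1) n, ((Nat.factorial (n - a) : ℝ) * (Nat.factorial (a - k) : ℝ))
            = ((∑ a ∈ Ico (k+1) n, Nat.factorial (n - a) * Nat.factorial (a - k) : ℕ) : ℝ) := by
              push_cast; rfl
          _ ≤ ((4 * Nat.factorial (n - k - 1) : ℕ) : ℝ) := by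
              exact Nat.cast_le.mpr (hN ▸ this)
          _ = 4 * (Nat.factorial (n - k - 1) : ℝ) := by push_cast; rfl
      calc (x * (4*x)^k) * ∑ a ∈ Ico (k+1) n, ((Nat.factorial (n - a) : ℝ) * (Nat.factorial (a - k) : ℝ))
          ≤ (x * (4*x)^k) * (4 * (Nat.factorial (n - k - 1) : ℝ)) := by
            apply mul_le_mul_of_nonneg_left hsum (by positivity)
        _ = (4*x)^(k+1) * (Nat.factorial (n - (k+1)) : ℝ) := by
            have : n - (k+1) = n - k - 1 := by omega
            rw [this]; ring
    calc ∑ k ∈ range (n-1), ∑ a ∈ Ico (k+1) n, (x * (4*x)^k) * ((Nat.factorial (n - a) : ℝ) * (Nat.factorial (a - k) : ℝ))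
        ≤ ∑ k ∈ range (n-1), (4*x)^(k+1) * (Nat.factorial (n - (k+1)) : ℝ) :=
          Finset.sum_le_sum inner
      _ = ∑ k ∈ Ico 1 n, (4*x)^k * (Nat.factorial (n - k) : ℝ) := by
          rw [Finset.sum_Ico_eq_sum_range]
          apply Finset.sum_congr (by congr 1)
          intro i _
          rw [add_comm 1 i]
  have hFb : Fb x n = (Nat.factorial n : ℝ) + ∑ k ∈ Ico 1 n, (4*x)^k * (Nat.factorial (n - k) : ℝ) := by
    rw [Fb, Finset.range_eq_Ico, Finset.sum_eq_sum_Ico_succ_bot (by omega : 0 < n)]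
    norm_num
  rw [hFb]
  linarith [key]

lemma fact_ge_pow (k : ℕ) : ((k:ℝ)/3)^k ≤ (Nat.factorial k : ℝ) := by
  have hk0 : (0:ℝ) ≤ (k:ℝ) := Nat.cast_nonneg k
  have h1 : ((k:ℝ))^k / (Nat.factorial k : ℝ) ≤ Real.exp k := by
    have := Real.sum_le_exp_of_nonneg hk0 (k+1)
    have hterm : ((k:ℝ))^k / (Nat.factorial k : ℝ) ≤ ∑ i ∈ range (k+1), (k:ℝ)^i / (Nat.factorial i : ℝ) := by
      apply Finset.single_le_sum (f := fun i => (k:ℝ)^i / (Nat.factorial i : ℝ))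
      · intro i _; positivity
      · simp
    linarith
  have h2 : Real.exp (k:ℝ) ≤ 3^k := by
    rw [← Real.exp_one_rpow (k:ℝ)]
    rw [show ((k:ℕ):ℝ) = ((k:ℕ):ℝ) from rfl]
    rw [Real.rpow_natCast]
    apply pow_le_pow_left₀ (le_of_lt (Real.exp_pos 1))
    linarith [Real.exp_one_lt_d9]
  have hf : (0:ℝ) < (Nat.factorial k : ℝ) := by positivity
  rw [div_pow]
  rw [div_le_iff₀ (by positivity)]
  rw [div_le_iff₀ hf] at h1
  calc ((k:ℝ))^k ≤ Real.exp k * (Nat.factorial k : ℝ) := h1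
    _ ≤ 3^k * (Nat.factorial k : ℝ) := by
        apply mul_le_mul_of_nonneg_right h2 (le_of_lt hf)
    _ = (Nat.factorial k : ℝ) * 3^k := by ring

lemma desc_ge_pow {n k : ℕ} (hk : k ≤ n) : ((n:ℝ)/6)^k ≤ (n.descFactorial k : ℝ) := by
  rcases le_or_gt (k + k) n with h | h
  · -- shallow: each factor ≥ n/2
    rw [Nat.descFactorial_eq_prod_range]
    push_cast
    calc ((n:ℝ)/6)^k = ∏ _i ∈ range k, ((n:ℝ)/6) := by rw [Finset.prod_const]; congr 1; exact (Finset.card_range k).symm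
      _ ≤ ∏ i ∈ range k, ((n:ℝ) - i) := by
          apply Finset.prod_le_prod
          · intro i _; positivity
          · intro i hi
            rw [Finset.mem_range] at hi
            have : (i:ℝ) < k := by exact_mod_cast hi
            have hn : (k:ℝ) + (k:ℝ) ≤ n := by exact_mod_cast h
            linarith
      _ = ∏ i ∈ range k, (((n - i : ℕ)):ℝ) := by
          apply Finset.prod_congr rfl
          intro i hi
          rw [Finset.mem_range] at hi
          have : i ≤ n := by omega
          push_cast [this]
          ring
  · -- deep: descFactorial ≥ k! ≥ (k/3)^k ≥ (n/6)^k
    have h1 : Nat.factorial k ≤ n.descFactorial k := by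
      have := Nat.descFactorial_le k hk
      rwa [Nat.descFactorial_self] at this
    have h2 : ((n:ℝ)/6)^k ≤ ((k:ℝ)/3)^k := by
      apply pow_le_pow_left₀ (by positivity)
      have : (n:ℝ) < k + k := by exact_mod_cast h
      linarith
    calc ((n:ℝ)/6)^k ≤ ((k:ℝ)/3)^k := h2
      _ ≤ (Nat.factorial k : ℝ) := fact_ge_pow k
      _ ≤ (n.descFactorial k : ℝ) := by exact_mod_cast h1

lemma fact_term_le {n k : ℕ} (hk : k ≤ n) :
    (Nat.factorial (n - k) : ℝ) * ((n:ℝ)/6)^k ≤ (Nat.factorial n : ℝ) := by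
  have := Nat.factorial_mul_descFactorial hk
  calc (Nat.factorial (n - k) : ℝ) * ((n:ℝ)/6)^k
      ≤ (Nat.factorial (n - k) : ℝ) * (n.descFactorial k : ℝ) := by
        apply mul_le_mul_of_nonneg_left (desc_ge_pow hk) (by positivity)
    _ = (Nat.factorial n : ℝ) := by exact_mod_cast congrArg (Nat.cast (R := ℝ)) this

lemma Fb_le {x : ℝ} (hx : 1 ≤ x) {n : ℕ} (h : 24 * x < n) :
    (1 - 24*x/n) * Fb x n ≤ (Nat.factorial n : ℝ) := by
  have hn0 : (0:ℝ) < n := by linarith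
  have hx0 : (0:ℝ) < x := by linarith
  set r : ℝ := 24*x/n with hr
  have hr0 : 0 < r := by positivity
  have hr1 : r < 1 := by rw [hr, div_lt_one hn0]; exact h
  have hterm : ∀ k ∈ range n, (4*x)^k * (Nat.factorial (n - k) : ℝ)
      ≤ (Nat.factorial n : ℝ) * r^k := by
    intro k hk
    rw [Finset.mem_range] at hk
    have h1 := fact_term_le (n := n) (k := k) (le_of_lt hk)
    have h2 : ((n:ℝ)/6)^k > 0 := by positivity
    rw [← le_div_iff₀ h2] at h1
    calc (4*x)^k * (Nat.factorial (n - k) : ℝ)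
        ≤ (4*x)^k * ((Nat.factorial n : ℝ) / ((n:ℝ)/6)^k) := by
          apply mul_le_mul_of_nonneg_left h1 (by positivity)
      _ = (Nat.factorial n : ℝ) * r^k := by
          have key : (4*x)^k / ((n:ℝ)/6)^k = r^k := by
            rw [← div_pow]
            congr 1
            rw [hr]
            field_simp
            ring
          rw [← key]
          ring
  have hFb : Fb x n ≤ (Nat.factorial n : ℝ) * ∑ k ∈ range n, r^k := by
    rw [Finset.mul_sum]
    exact Finset.sum_le_sum hterm
  have hgeom : (1 - r) * ∑ k ∈ range n, r^k = 1 - r^n := by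
    have := geom_sum_mul r n
    linarith [this]
  have h1r : 0 ≤ 1 - r := by linarith
  calc (1 - r) * Fb x n ≤ (1 - r) * ((Nat.factorial n : ℝ) * ∑ k ∈ range n, r^k) := by
        apply mul_le_mul_of_nonneg_left hFb h1r
    _ = (Nat.factorial n : ℝ) * (1 - r^n) := by rw [← hgeom]; ring
    _ ≤ (Nat.factorial n : ℝ) * 1 := by
        apply mul_le_mul_of_nonneg_left _ (by positivity)
        have : 0 ≤ r^n := by positivity
        linarith
    _ = _ := mul_one _

def agr (n : ℕ) (ρ : Equiv.Perm (Fin n)) : Finset ℕ :=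
  (Finset.Ico 1 n).filter (fun i => ∀ j : Fin n, ((ρ j : ℕ) < i ↔ (j : ℕ) < i))

noncomputable def Phi (x : ℝ) (n : ℕ) : ℝ :=
  ∑ ρ : Equiv.Perm (Fin n), x ^ (agr n ρ).card

lemma Phi_nonneg {x : ℝ} (hx : 1 ≤ x) (n : ℕ) : 0 ≤ Phi x n :=
  Finset.sum_nonneg (fun ρ _ => pow_nonneg (by linarith) _)

lemma fiber_bound {x : ℝ} (hx : 1 ≤ x) {n a : ℕ} (ha1 : 1 ≤ a) (han : a < n) :
    ∑ ρ ∈ Finset.univ.filter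
        (fun ρ : Equiv.Perm (Fin n) => (agr n ρ).max.unbotD 0 = a),
      x ^ (agr n ρ).card
    ≤ x * ((Nat.factorial (n - a) : ℝ) * Phi x a) := by
  classical
  have hx0 : (0:ℝ) ≤ x := by linarith
  set fib := Finset.univ.filter
      (fun ρ : Equiv.Perm (Fin n) => (agr n ρ).max.unbotD 0 = a) with hfib
  have hagree : ∀ ρ ∈ fib, ∀ j : Fin n, ((ρ j : ℕ) < a ↔ (j : ℕ) < a) := by
    intro ρ hρ
    rw [hfib, Finset.mem_filter] at hρ
    have hL : (agr n ρ).max.unbotD 0 = a := hρ.2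
    rcases hm : (agr n ρ).max with _ | b
    · rw [hm] at hL
      have h0 : 0 = a := hL
      omega
    · rw [hm] at hL
      have hba : b = a := hL
      subst hba
      have := Finset.mem_of_max hm
      rw [agr, Finset.mem_filter] at this
      exact this.2
  -- the reduction map
  have hmemn : ∀ j : Fin a, (j : ℕ) < n := fun j => lt_trans j.2 han
  have haddlt : ∀ t : Fin (n - a), a + (t:ℕ) < n := fun t => by omega
  set down : Equiv.Perm (Fin n) → Equiv.Perm (Fin a) × (Fin (n - a) ↪ Fin (n - a)) :=
    fun ρ =>
      if h : ∀ j : Fin n, ((ρ j : ℕ) < a ↔ (j : ℕ) < a) then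
        (Equiv.ofBijective
          (fun j : Fin a => (⟨(ρ ⟨(j:ℕ), hmemn j⟩ : Fin n), (h ⟨(j:ℕ), hmemn j⟩).mpr j.2⟩ : Fin a))
          (by
            apply Finite.injective_iff_bijective.mp
            intro j1 j2 heq
            have h3 : ((ρ ⟨(j1:ℕ), hmemn j1⟩ : Fin n) : ℕ) = ((ρ ⟨(j2:ℕ), hmemn j2⟩ : Fin n) : ℕ) :=
              congrArg (fun z : Fin a => (z : ℕ)) heq
            have h2 := ρ.injective (Fin.ext h3)
            have h4 : ((j1:ℕ)) = ((j2:ℕ)) := congrArg (fun z : Fin n => (z : ℕ)) h2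
            exact Fin.ext h4),
        ⟨fun t => ⟨(ρ ⟨a + (t:ℕ), haddlt t⟩ : ℕ) - a, by
            have hge : ¬ ((ρ ⟨a + (t:ℕ), haddlt t⟩ : ℕ) < a) := by
              rw [h ⟨a + (t:ℕ), haddlt t⟩]
              simp
            have := (ρ ⟨a + (t:ℕ), haddlt t⟩).2
            omega⟩, by
          intro t1 t2 heq
          have h3 := congrArg Fin.val heq
          simp only at h3
          have hge1 : ¬ ((ρ ⟨a + (t1:ℕ), haddlt t1⟩ : ℕ) < a) := by
            rw [h ⟨a + (t1:ℕ), haddlt t1⟩]; simp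
          have hge2 : ¬ ((ρ ⟨a + (t2:ℕ), haddlt t2⟩ : ℕ) < a) := by
            rw [h ⟨a + (t2:ℕ), haddlt t2⟩]; simp
          have hv : (ρ ⟨a + (t1:ℕ), haddlt t1⟩ : ℕ) = (ρ ⟨a + (t2:ℕ), haddlt t2⟩ : ℕ) := by omega
          have h4 := ρ.injective (Fin.ext hv)
          have h5 := congrArg Fin.val h4
          simp only at h5
          exact Fin.ext (by omega)⟩)
      else (1, ⟨id, fun _ _ hh => hh⟩) with hdown
  -- value lemmas for the reduction map
  have hval1 : ∀ ρ : Equiv.Perm (Fin n), (hA : ∀ j : Fin n, ((ρ j : ℕ) < a ↔ (j : ℕ) < a)) →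
      ∀ j' : Fin a, (((down ρ).1 j' : Fin a) : ℕ) = ((ρ ⟨(j':ℕ), hmemn j'⟩ : Fin n) : ℕ) := by
    intro ρ hA j'
    rw [hdown]
    simp only [dif_pos hA]
    rfl
  have hval2 : ∀ ρ : Equiv.Perm (Fin n), (hA : ∀ j : Fin n, ((ρ j : ℕ) < a ↔ (j : ℕ) < a)) →
      ∀ t : Fin (n - a), (((down ρ).2 t : Fin (n - a)) : ℕ)
        = ((ρ ⟨a + (t:ℕ), haddlt t⟩ : Fin n) : ℕ) - a := by
    intro ρ hA t
    rw [hdown]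
    simp only [dif_pos hA]
    rfl
  -- pointwise bound
  have hpt : ∀ ρ ∈ fib, x ^ (agr n ρ).card ≤ x * x ^ (agr a (down ρ).1).card := by
    intro ρ hρ
    have hA := hagree ρ hρ
    have hsub : agr n ρ ⊆ insert a (agr a (down ρ).1) := by
      intro i hi
      have hi' := hi
      rw [agr, Finset.mem_filter, Finset.mem_Ico] at hi'
      obtain ⟨⟨hi1, hin⟩, hP⟩ := hi'
      have hle : i ≤ a := by
        have hmax := Finset.le_max hi
        rw [hfib, Finset.mem_filter] at hρ
        have hL : (agr n ρ).max.unbotD 0 = a := hρ.2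
        rcases hm : (agr n ρ).max with _ | b
        · rw [hm] at hmax; exact absurd hmax (WithBot.not_coe_le_bot i)
        · rw [hm] at hmax hL
          have hba : b = a := hL
          subst hba
          exact WithBot.coe_le_coe.mp hmax
      rcases eq_or_lt_of_le hle with heq | hlt
      · subst heq; exact Finset.mem_insert_self _ _
      · apply Finset.mem_insert_of_mem
        rw [agr, Finset.mem_filter, Finset.mem_Ico]
        refine ⟨⟨hi1, hlt⟩, ?_⟩
        intro j'
        rw [hval1 ρ hA j']
        exact hP ⟨(j':ℕ), hmemn j'⟩
    have hcard : (agr n ρ).card ≤ (agr a (down ρ).1).card + 1 := by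
      calc (agr n ρ).card ≤ (insert a (agr a (down ρ).1)).card := Finset.card_le_card hsub
        _ ≤ (agr a (down ρ).1).card + 1 := Finset.card_insert_le _ _
    calc x ^ (agr n ρ).card ≤ x ^ ((agr a (down ρ).1).card + 1) := pow_le_pow_right₀ hx hcard
      _ = x * x ^ (agr a (down ρ).1).card := by rw [pow_succ]; ring
  -- injectivity on the fiber
  have hinj : ∀ ρ1 ∈ fib, ∀ ρ2 ∈ fib, down ρ1 = down ρ2 → ρ1 = ρ2 := by
    intro ρ1 h1 ρ2 h2 heq
    have hA1 := hagree ρ1 h1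
    have hA2 := hagree ρ2 h2
    apply Equiv.ext
    intro j
    rcases lt_or_ge (j : ℕ) a with hja | hja
    · have e1 : (down ρ1).1 = (down ρ2).1 := congrArg Prod.fst heq
      have e2 : (((down ρ1).1 ⟨(j:ℕ), hja⟩ : Fin a) : ℕ) = (((down ρ2).1 ⟨(j:ℕ), hja⟩ : Fin a) : ℕ) := by
        rw [e1]
      rw [hval1 ρ1 hA1 ⟨(j:ℕ), hja⟩, hval1 ρ2 hA2 ⟨(j:ℕ), hja⟩] at e2
      have hj : (⟨((⟨(j:ℕ), hja⟩ : Fin a) : ℕ), hmemn ⟨(j:ℕ), hja⟩⟩ : Fin n) = j := Fin.ext rfl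
      rw [hj] at e2
      exact Fin.ext e2
    · have hlt : (j:ℕ) - a < n - a := by have := j.2; omega
      have e1 : (down ρ1).2 = (down ρ2).2 := congrArg Prod.snd heq
      have e2 : (((down ρ1).2 ⟨(j:ℕ) - a, hlt⟩ : Fin (n-a)) : ℕ)
          = (((down ρ2).2 ⟨(j:ℕ) - a, hlt⟩ : Fin (n-a)) : ℕ) := by rw [e1]
      rw [hval2 ρ1 hA1 ⟨(j:ℕ) - a, hlt⟩, hval2 ρ2 hA2 ⟨(j:ℕ) - a, hlt⟩] at e2
      have hj : (⟨a + (((⟨(j:ℕ) - a, hlt⟩ : Fin (n-a))) : ℕ), haddlt ⟨(j:ℕ) - a, hlt⟩⟩ : Fin n) = j :=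
        Fin.ext (by simp only; omega)
      rw [hj] at e2
      have hge1 : ¬ ((ρ1 j : ℕ) < a) := by rw [hA1 j]; omega
      have hge2 : ¬ ((ρ2 j : ℕ) < a) := by rw [hA2 j]; omega
      exact Fin.ext (by omega)
  -- put it together
  have step1 : ∑ ρ ∈ fib, x ^ (agr n ρ).card ≤ x * ∑ ρ ∈ fib, x ^ (agr a (down ρ).1).card := by
    rw [Finset.mul_sum]
    apply Finset.sum_le_sum
    intro ρ hρ
    exact hpt ρ hρ
  have step2 : ∑ q ∈ fib.image down, x ^ (agr a q.1).card
      = ∑ ρ ∈ fib, x ^ (agr a (down ρ).1).card :=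
    Finset.sum_image hinj
  have step3 : ∑ q ∈ fib.image down, x ^ (agr a q.1).card
      ≤ ∑ q : Equiv.Perm (Fin a) × (Fin (n - a) ↪ Fin (n - a)), x ^ (agr a q.1).card := by
    apply Finset.sum_le_sum_of_subset_of_nonneg (Finset.subset_univ _)
    intro q _ _
    positivity
  have step4 : ∑ q : Equiv.Perm (Fin a) × (Fin (n - a) ↪ Fin (n - a)), x ^ (agr a q.1).card
      = (Nat.factorial (n - a) : ℝ) * Phi x a := by
    rw [Fintype.sum_prod_type]
    have : ∀ p : Equiv.Perm (Fin a),
        ∑ _e : Fin (n - a) ↪ Fin (n - a), x ^ (agr a p).card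
        = (Nat.factorial (n - a) : ℝ) * x ^ (agr a p).card := by
      intro p
      rw [Finset.sum_const, Finset.card_univ, Fintype.card_embedding_eq, Fintype.card_fin,
        Nat.descFactorial_self, nsmul_eq_mul]
    rw [Finset.sum_congr rfl (fun p _ => this p), Phi, ← Finset.mul_sum]
  calc ∑ ρ ∈ fib, x ^ (agr n ρ).card
      ≤ x * ∑ ρ ∈ fib, x ^ (agr a (down ρ).1).card := step1
    _ = x * ∑ q ∈ fib.image down, x ^ (agr a q.1).card := by rw [step2]
    _ ≤ x * ((Nat.factorial (n - a) : ℝ) * Phi x a) := by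
        apply mul_le_mul_of_nonneg_left _ hx0
        rw [← step4]
        exact step3

lemma Phi_le_Fb {x : ℝ} (hx : 1 ≤ x) : ∀ n, 1 ≤ n → Phi x n ≤ Fb x n := by
  intro n
  induction n using Nat.strong_induction_on with
  | _ n IH =>
  intro hn
  classical
  have hx0 : (0:ℝ) ≤ x := by linarith
  set L : Equiv.Perm (Fin n) → ℕ := fun ρ => (agr n ρ).max.unbotD 0 with hL
  have hLmem : ∀ ρ : Equiv.Perm (Fin n), L ρ ∈ range n := by
    intro ρ
    rw [Finset.mem_range, hL]
    show WithBot.unbotD 0 (agr n ρ).max < n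
    rcases hm : (agr n ρ).max with _ | b
    · show (0:ℕ) < n
      omega
    · show b < n
      have := Finset.mem_of_max hm
      rw [agr, Finset.mem_filter, Finset.mem_Ico] at this
      omega
  have hsplit : Phi x n = ∑ a ∈ range n, ∑ ρ ∈ Finset.univ.filter (fun ρ => L ρ = a),
      x ^ (agr n ρ).card := by
    rw [Phi]
    rw [Finset.sum_fiberwise_of_maps_to (fun ρ _ => hLmem ρ)]
  have hzero : ∑ ρ ∈ Finset.univ.filter (fun ρ : Equiv.Perm (Fin n) => L ρ = 0),
      x ^ (agr n ρ).card ≤ (Nat.factorial n : ℝ) := by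
    have hemp : ∀ ρ ∈ Finset.univ.filter (fun ρ : Equiv.Perm (Fin n) => L ρ = 0),
        x ^ (agr n ρ).card = 1 := by
      intro ρ hρ
      rw [Finset.mem_filter] at hρ
      have h0 : (agr n ρ).max.unbotD 0 = 0 := hρ.2
      rcases hm : (agr n ρ).max with _ | b
      · have : agr n ρ = ∅ := Finset.max_eq_bot.mp hm
        rw [this]
        simp
      · rw [hm] at h0
        have hb0 : b = 0 := h0
        subst hb0
        have := Finset.mem_of_max hm
        rw [agr, Finset.mem_filter, Finset.mem_Ico] at this
        omega
    rw [Finset.sum_congr rfl hemp]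
    rw [Finset.sum_const, nsmul_eq_mul, mul_one]
    have : (Finset.univ.filter (fun ρ : Equiv.Perm (Fin n) => L ρ = 0)).card
        ≤ Fintype.card (Equiv.Perm (Fin n)) := by
      apply le_trans (Finset.card_filter_le _ _)
      rw [Fintype.card]
    calc ((Finset.univ.filter (fun ρ : Equiv.Perm (Fin n) => L ρ = 0)).card : ℝ)
        ≤ (Fintype.card (Equiv.Perm (Fin n)) : ℝ) := by exact_mod_cast this
      _ = (Nat.factorial n : ℝ) := by rw [Fintype.card_perm, Fintype.card_fin]
  have hranges : range n = insert 0 (Ico 1 n) := by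
    ext i
    simp [Finset.mem_Ico]
    omega
  calc Phi x n = ∑ a ∈ range n, ∑ ρ ∈ Finset.univ.filter (fun ρ => L ρ = a),
        x ^ (agr n ρ).card := hsplit
    _ = (∑ ρ ∈ Finset.univ.filter (fun ρ : Equiv.Perm (Fin n) => L ρ = 0), x ^ (agr n ρ).card)
        + ∑ a ∈ Ico 1 n, ∑ ρ ∈ Finset.univ.filter (fun ρ => L ρ = a), x ^ (agr n ρ).card := by
        rw [hranges, Finset.sum_insert (by simp)]
    _ ≤ (Nat.factorial n : ℝ)
        + ∑ a ∈ Ico 1 n, (x * ((Nat.factorial (n - a) : ℝ) * Phi x a)) := by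
        apply add_le_add hzero
        apply Finset.sum_le_sum
        intro a ha
        rw [Finset.mem_Ico] at ha
        exact fiber_bound hx ha.1 ha.2
    _ ≤ (Nat.factorial n : ℝ)
        + ∑ a ∈ Ico 1 n, (x * ((Nat.factorial (n - a) : ℝ) * Fb x a)) := by
        apply add_le_add_right
        apply Finset.sum_le_sum
        intro a ha
        rw [Finset.mem_Ico] at ha
        apply mul_le_mul_of_nonneg_left _ hx0
        apply mul_le_mul_of_nonneg_left _ (by positivity)
        exact IH a ha.2 ha.1
    _ = (Nat.factorial n : ℝ) + x * ∑ a ∈ Ico 1 n, (Nat.factorial (n - a) : ℝ) * Fb x a := by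
        rw [Finset.mul_sum]
    _ ≤ Fb x n := Fb_rec hx hn

lemma chung_erdos {Ω : Type*} [MeasurableSpace Ω] (μ : Measure Ω) [IsFiniteMeasure μ]
    {ι : Type*} [Fintype ι] [DecidableEq ι] (A : ι → Set Ω) (hA : ∀ i, MeasurableSet (A i)) :
    (∑ i, (μ (A i)).toReal)^2
      ≤ (μ (⋃ i, A i)).toReal * ∑ i, ∑ j, (μ (A i ∩ A j)).toReal := by
  classical
  set φ : Ω → Finset ι := fun ω => Finset.univ.filter (fun i => ω ∈ A i) with hφ
  set B : Finset ι → Set Ω := fun s => φ ⁻¹' {s} with hB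
  have hφmem : ∀ ω i, i ∈ φ ω ↔ ω ∈ A i := by
    intro ω i; rw [hφ]; simp
  have hBmeas : ∀ s, MeasurableSet (B s) := by
    intro s
    have heq : B s = (⋂ i ∈ s, A i) ∩ (⋂ i ∈ sᶜ, (A i)ᶜ) := by
      ext ω
      simp only [hB, Set.mem_preimage, Set.mem_singleton_iff, Set.mem_inter_iff,
        Set.mem_iInter, Set.mem_compl_iff, Finset.mem_compl]
      constructor
      · intro h
        subst h
        exact ⟨fun i hi => (hφmem ω i).mp hi, fun i hi => fun hc => hi ((hφmem ω i).mpr hc)⟩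
      · intro ⟨h1, h2⟩
        apply Finset.ext
        intro i
        rw [hφmem ω i]
        constructor
        · intro hAi
          by_contra hc
          exact h2 i hc hAi
        · intro his
          exact h1 i his
    rw [heq]
    exact (Finset.measurableSet_biInter _ (fun i _ => hA i)).inter
      (Finset.measurableSet_biInter _ (fun i _ => (hA i).compl))
  have hdisj : ∀ (t : Finset (Finset ι)), Set.PairwiseDisjoint (t : Set (Finset ι)) B := by
    intro t s1 _ s2 _ hne
    apply Set.disjoint_left.mpr
    intro ω h1 h2
    exact hne (by rw [← h1, ← h2])
  set w : Finset ι → ℝ := fun s => (μ (B s)).toReal with hw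
  have hw0 : ∀ s, 0 ≤ w s := fun s => ENNReal.toReal_nonneg
  -- decomposition of unions of fibers
  have hudecomp : ∀ (P : Finset ι → Prop) [DecidablePred P],
      μ {ω | P (φ ω)} = ∑ s ∈ Finset.univ.filter P, μ (B s) := by
    intro P _
    have : {ω | P (φ ω)} = ⋃ s ∈ Finset.univ.filter P, B s := by
      ext ω
      simp only [Set.mem_setOf_eq, Set.mem_iUnion, Finset.mem_filter, Finset.mem_univ, true_and]
      constructor
      · intro h; exact ⟨φ ω, h, rfl⟩
      · rintro ⟨s, hPs, hmem⟩
        have : φ ω = s := hmem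
        rw [this]; exact hPs
    rw [this]
    exact measure_biUnion_finset (hdisj _) (fun s _ => hBmeas s)
  have hreal : ∀ (P : Finset ι → Prop) [DecidablePred P],
      (μ {ω | P (φ ω)}).toReal = ∑ s ∈ Finset.univ.filter P, w s := by
    intro P _
    rw [hudecomp P]
    rw [ENNReal.toReal_sum (fun s _ => measure_ne_top μ _)]
  -- single sums
  have hsingle : ∀ i, (μ (A i)).toReal = ∑ s : Finset ι, (if i ∈ s then w s else 0) := by
    intro i
    have h1 : A i = {ω | i ∈ φ ω} := by ext ω; rw [Set.mem_setOf_eq, hφmem ω i]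
    rw [h1, hreal (fun s => i ∈ s), Finset.sum_filter]
  have hpair : ∀ i j, (μ (A i ∩ A j)).toReal
      = ∑ s : Finset ι, (if i ∈ s ∧ j ∈ s then w s else 0) := by
    intro i j
    have h1 : A i ∩ A j = {ω | i ∈ φ ω ∧ j ∈ φ ω} := by
      ext ω
      rw [Set.mem_inter_iff, Set.mem_setOf_eq, hφmem ω i, hφmem ω j]
    rw [h1, hreal (fun s => i ∈ s ∧ j ∈ s), Finset.sum_filter]
  have hunion : (μ (⋃ i, A i)).toReal = ∑ s ∈ Finset.univ.filter (fun s : Finset ι => s ≠ ∅), w s := by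
    have h1 : (⋃ i, A i) = {ω | φ ω ≠ ∅} := by
      ext ω
      simp only [Set.mem_iUnion, Set.mem_setOf_eq, ← Finset.nonempty_iff_ne_empty]
      constructor
      · rintro ⟨i, hi⟩; exact ⟨i, (hφmem ω i).mpr hi⟩
      · rintro ⟨i, hi⟩; exact ⟨i, (hφmem ω i).mp hi⟩
    rw [h1, hreal (fun s => s ≠ ∅)]
  -- sums in terms of w
  have hS1 : ∑ i, (μ (A i)).toReal = ∑ s : Finset ι, w s * s.card := by
    rw [Finset.sum_congr rfl (fun i _ => hsingle i), Finset.sum_comm]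
    apply Finset.sum_congr rfl
    intro s _
    rw [Finset.sum_ite_mem, Finset.univ_inter, Finset.sum_const, nsmul_eq_mul, mul_comm]
  have hS2 : ∑ i, ∑ j, (μ (A i ∩ A j)).toReal = ∑ s : Finset ι, w s * (s.card)^2 := by
    have : ∀ i, ∑ j, (μ (A i ∩ A j)).toReal
        = ∑ s : Finset ι, (if i ∈ s then w s * s.card else 0) := by
      intro i
      rw [Finset.sum_congr rfl (fun j _ => hpair i j), Finset.sum_comm]
      apply Finset.sum_congr rfl
      intro s _
      have : ∀ j, (if i ∈ s ∧ j ∈ s then w s else 0) = (if i ∈ s then (if j ∈ s then w s else 0) else 0) := by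
        intro j; split_ifs <;> tauto
      rw [Finset.sum_congr rfl (fun j _ => this j)]
      split_ifs with h
      · rw [Finset.sum_ite_mem, Finset.univ_inter, Finset.sum_const, nsmul_eq_mul, mul_comm]
      · rw [Finset.sum_const_zero]
    rw [Finset.sum_congr rfl (fun i _ => this i), Finset.sum_comm]
    apply Finset.sum_congr rfl
    intro s _
    rw [Finset.sum_ite_mem, Finset.univ_inter, Finset.sum_const, nsmul_eq_mul]
    ring
  -- Cauchy-Schwarz
  set f : Finset ι → ℝ := fun s => if s = ∅ then 0 else Real.sqrt (w s) with hf
  set g : Finset ι → ℝ := fun s => Real.sqrt (w s) * s.card with hg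
  have hCS := Finset.sum_mul_sq_le_sq_mul_sq Finset.univ f g
  have hfg : ∀ s : Finset ι, f s * g s = w s * s.card := by
    intro s
    rw [hf, hg]
    by_cases h : s = ∅
    · simp [h]
    · simp only [if_neg h]
      rw [← mul_assoc, Real.mul_self_sqrt (hw0 s)]
  have hf2 : ∀ s : Finset ι, f s ^ 2 = if s ≠ ∅ then w s else 0 := by
    intro s
    rw [hf]
    by_cases h : s = ∅
    · simp [h]
    · simp only [if_neg h, if_pos h]
      exact Real.sq_sqrt (hw0 s)
  have hg2 : ∀ s : Finset ι, g s ^ 2 = w s * (s.card)^2 := by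
    intro s
    rw [hg, mul_pow, Real.sq_sqrt (hw0 s)]
  rw [hS1, hS2, hunion]
  calc (∑ s : Finset ι, w s * s.card)^2 = (∑ s : Finset ι, f s * g s)^2 := by
        rw [Finset.sum_congr rfl (fun s _ => (hfg s).symm)]
    _ ≤ (∑ s : Finset ι, f s ^2) * (∑ s : Finset ι, g s^2) := hCS
    _ = (∑ s ∈ Finset.univ.filter (fun s : Finset ι => s ≠ ∅), w s) * ∑ s : Finset ι, w s * (s.card)^2 := by
        rw [Finset.sum_congr rfl (fun s _ => hf2 s), Finset.sum_congr rfl (fun s _ => hg2 s),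
          ← Finset.sum_filter]

def vert (n : ℕ) (σ : Equiv.Perm (Fin n)) (i : ℕ) : Fin n → Bool :=
  fun j => decide ((σ.symm j : ℕ) < i)

def pathOfPerm (n : ℕ) (σ : Equiv.Perm (Fin n)) : HypercubePath n := by
  refine ⟨fun i => vert n σ (i : ℕ), ?_, ?_, ?_⟩
  · intro j
    simp [vert]
  · intro j
    simp only [vert, Fin.val_last]
    exact decide_eq_true (σ.symm j).2
  · intro i
    refine ⟨σ i, ?_, ?_⟩
    · simp only [vert, Fin.coe_castSucc]
      rw [Equiv.symm_apply_apply]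
      simp
    · intro j'
      simp only [vert, Fin.val_succ, Fin.coe_castSucc]
      by_cases h : j' = σ i
      · subst h
        rw [if_pos rfl, Equiv.symm_apply_apply]
        simp
      · rw [if_neg h]
        have hne : σ.symm j' ≠ i := by
          intro hc
          apply h
          rw [← hc, Equiv.apply_symm_apply]
        apply decide_eq_decide.mpr
        have : (σ.symm j' : ℕ) ≠ (i : ℕ) := fun hc => hne (Fin.ext hc)
        omega

lemma card_filter_lt (n i : ℕ) (h : i ≤ n) :
    (Finset.univ.filter (fun j : Fin n => (j:ℕ) < i)).card = i := by
  induction i with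
  | zero => simp
  | succ i ih =>
    have hi : i ≤ n := by omega
    have hii : i < n := by omega
    have hins : Finset.univ.filter (fun j : Fin n => (j:ℕ) < i + 1)
        = insert (⟨i, hii⟩ : Fin n) (Finset.univ.filter (fun j : Fin n => (j:ℕ) < i)) := by
      ext j
      simp only [Finset.mem_filter, Finset.mem_univ, true_and, Finset.mem_insert]
      constructor
      · intro hj
        rcases Nat.lt_succ_iff_lt_or_eq.mp hj with h' | h'
        · right; exact h'
        · left; exact Fin.ext h'
      · rintro (h' | h')
        · subst h'; simp
        · omega
    rw [hins, Finset.card_insert_of_notMem (by simp), ih hi]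

lemma vert_ones (n : ℕ) (σ : Equiv.Perm (Fin n)) (i : ℕ) (h : i ≤ n) :
    (Finset.univ.filter (fun j : Fin n => vert n σ i j = true)).card = i := by
  have h1 : Finset.univ.filter (fun j : Fin n => vert n σ i j = true)
      = Finset.univ.filter (fun j : Fin n => ((σ.symm j : ℕ) < i)) := by
    apply Finset.filter_congr
    intro j _
    simp [vert]
  rw [h1]
  have h2 : (Finset.univ.filter (fun j : Fin n => ((σ.symm j : ℕ) < i))).card
      = (Finset.univ.filter (fun j : Fin n => (j:ℕ) < i)).card := by
    apply Finset.card_equiv σ.symm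
    intro j
    simp
  rw [h2, card_filter_lt n i h]

lemma vert_inj (n : ℕ) (σ τ : Equiv.Perm (Fin n)) {i i' : ℕ} (hi : i ≤ n) (hi' : i' ≤ n)
    (h : vert n σ i = vert n τ i') : i = i' := by
  have h1 := vert_ones n σ i hi
  have h2 := vert_ones n τ i' hi'
  rw [← h1, ← h2, h]

lemma symm_flip (n : ℕ) (ρ : Equiv.Perm (Fin n)) (i : ℕ) :
    (∀ j : Fin n, ((ρ.symm j : ℕ) < i ↔ (j:ℕ) < i)) ↔
    (∀ j : Fin n, ((ρ j : ℕ) < i ↔ (j:ℕ) < i)) := by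
  constructor
  · intro h j
    have := h (ρ j)
    rw [Equiv.symm_apply_apply] at this
    exact this.symm
  · intro h j
    have := h (ρ.symm j)
    rw [Equiv.apply_symm_apply] at this
    exact this.symm

lemma vert_mul (n : ℕ) (σ ρ : Equiv.Perm (Fin n)) (i : ℕ) :
    vert n (σ * ρ) i = vert n σ i ↔ (∀ j : Fin n, ((ρ j : ℕ) < i ↔ (j:ℕ) < i)) := by
  have hsymm : ∀ j : Fin n, (σ * ρ).symm j = ρ.symm (σ.symm j) := by
    intro j; rfl
  rw [← symm_flip]
  constructor
  · intro h j
    have := congrFun h (σ j)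
    simp only [vert, hsymm, Equiv.symm_apply_apply] at this
    exact decide_eq_decide.mp this
  · intro h
    funext j
    simp only [vert, hsymm]
    exact decide_eq_decide.mpr (h (σ.symm j))

lemma pathOfPerm_val (n : ℕ) (σ : Equiv.Perm (Fin n)) (i : Fin (n+1)) :
    (pathOfPerm n σ).1 i = vert n σ (i : ℕ) := rfl

theorem core (μF : Measure ℝ) [IsProbabilityMeasure μF] (n : ℕ) (hn : 1 ≤ n)
    (cn l u : ℝ) (hul : u ≤ l + cn)
    (hε : 0 < (μF (Set.Ioc l u)).toReal)
    (hxn : 24 * (1 / (μF (Set.Ioc l u)).toReal) < n) :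
    ENNReal.ofReal (1 - 24 / ((μF (Set.Ioc l u)).toReal * n))
      ≤ (Measure.pi fun _ : Fin n → Bool => μF)
          {η : (Fin n → Bool) → ℝ | ∃ P : HypercubePath n,
            ∀ (i : Fin (n + 1)) (h2 : i.1 + 1 < n), 1 ≤ i.1 →
              η (P.1 i) + cn * i.1 <
                η (P.1 ⟨i.1 + 1, Nat.lt_succ_of_lt h2⟩) + cn * (i.1 + 1)} := by
  classical
  set I : Set ℝ := Set.Ioc l u with hI
  set εE : ENNReal := μF I with hεE
  set ε : ℝ := εE.toReal with hε'
  set x : ℝ := 1/ε with hx'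
  have hεE_ne_top : εE ≠ ⊤ := measure_ne_top _ _
  have hε1 : ε ≤ 1 := by
    rw [hε', ← ENNReal.toReal_one]
    exact ENNReal.toReal_mono ENNReal.one_ne_top prob_le_one
  have hx1 : 1 ≤ x := by
    rw [hx']
    rw [le_one_div (by linarith) hε]
    simpa using hε1
  set μn : Measure ((Fin n → Bool) → ℝ) := Measure.pi fun _ : Fin n → Bool => μF with hμn
  have hImeas : MeasurableSet I := measurableSet_Ioc
  set V : Equiv.Perm (Fin n) → Finset (Fin n → Bool) :=
    fun σ => (Finset.Ico 1 n).image (vert n σ) with hV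
  set A : Equiv.Perm (Fin n) → Set ((Fin n → Bool) → ℝ) :=
    fun σ => Set.pi Set.univ (fun v => if v ∈ V σ then I else Set.univ) with hA
  have hAmeas : ∀ σ, MeasurableSet (A σ) := by
    intro σ
    apply MeasurableSet.univ_pi
    intro v
    split_ifs
    · exact hImeas
    · exact MeasurableSet.univ
  -- cylinder measures
  have hcyl : ∀ S : Finset (Fin n → Bool),
      μn (Set.pi Set.univ (fun v => if v ∈ S then I else Set.univ)) = εE ^ S.card := by
    intro S
    rw [hμn, Measure.pi_pi]
    have h1 : ∀ v : Fin n → Bool, μF (if v ∈ S then I else Set.univ) = (if v ∈ S then εE else 1) := by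
      intro v
      split_ifs
      · rfl
      · exact measure_univ
    rw [Finset.prod_congr rfl (fun v _ => h1 v), Finset.prod_ite_mem Finset.univ S (fun _ => εE),
      Finset.univ_inter, Finset.prod_const]
  -- cardinalities
  have hVcard : ∀ σ, (V σ).card = n - 1 := by
    intro σ
    rw [hV]
    rw [Finset.card_image_of_injOn, Nat.card_Ico]
    intro i hi i' hi' hv
    simp only [Finset.coe_Ico, Set.mem_Ico] at hi hi'
    exact vert_inj n σ σ (by omega) (by omega) hv
  set Sg : Equiv.Perm (Fin n) → Equiv.Perm (Fin n) → ℕ :=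
    fun σ τ => ((Finset.Ico 1 n).filter (fun i => vert n σ i = vert n τ i)).card with hSg
  have hSg_le : ∀ σ τ, Sg σ τ ≤ n - 1 := by
    intro σ τ
    rw [hSg]
    calc ((Finset.Ico 1 n).filter _).card ≤ (Finset.Ico 1 n).card := Finset.card_filter_le _ _
      _ = n - 1 := Nat.card_Ico 1 n
  have hinter : ∀ σ τ, V σ ∩ V τ = ((Finset.Ico 1 n).filter (fun i => vert n σ i = vert n τ i)).image (vert n σ) := by
    intro σ τ
    ext v
    simp only [Finset.mem_inter, hV, Finset.mem_image, Finset.mem_filter]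
    constructor
    · rintro ⟨⟨i, hi, hvi⟩, ⟨i', hi', hvi'⟩⟩
      rw [Finset.mem_Ico] at hi hi'
      have : i = i' := by
        apply vert_inj n σ τ (by omega) (by omega)
        rw [hvi, hvi']
      subst this
      exact ⟨i, ⟨Finset.mem_Ico.mpr hi, by rw [hvi, hvi']⟩, hvi⟩
    · rintro ⟨i, ⟨hi, hagr⟩, hvi⟩
      exact ⟨⟨i, hi, hvi⟩, ⟨i, hi, by rw [← hagr]; exact hvi⟩⟩
  have hintercard : ∀ σ τ, (V σ ∩ V τ).card = Sg σ τ := by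
    intro σ τ
    rw [hinter σ τ, hSg]
    apply Finset.card_image_of_injOn
    intro i hi i' hi' hv
    simp only [Finset.coe_filter, Set.mem_setOf_eq, Finset.mem_Ico] at hi hi'
    exact vert_inj n σ σ (by omega) (by omega) hv
  have hunioncard : ∀ σ τ, (V σ ∪ V τ).card = 2*(n-1) - Sg σ τ := by
    intro σ τ
    have := Finset.card_union_add_card_inter (V σ) (V τ)
    rw [hVcard σ, hVcard τ, hintercard σ τ] at this
    have h2 := hSg_le σ τ
    omega
  -- measures of events
  have hAmeasure : ∀ σ, μn (A σ) = εE ^ (n-1) := by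
    intro σ
    rw [hA]
    rw [hcyl (V σ), hVcard σ]
  have hAinter : ∀ σ τ, A σ ∩ A τ = Set.pi Set.univ (fun v => if v ∈ V σ ∪ V τ then I else Set.univ) := by
    intro σ τ
    rw [hA]
    rw [← Set.pi_inter_distrib]
    apply congrArg
    funext v
    by_cases h1 : v ∈ V σ <;> by_cases h2 : v ∈ V τ <;>
      simp [h1, h2, Finset.mem_union]
  have hAAmeasure : ∀ σ τ, μn (A σ ∩ A τ) = εE ^ (2*(n-1) - Sg σ τ) := by
    intro σ τ
    rw [hAinter σ τ, hcyl _, hunioncard σ τ]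
  -- real versions
  have hAreal : ∀ σ, (μn (A σ)).toReal = ε ^ (n-1) := by
    intro σ
    rw [hAmeasure σ, ENNReal.toReal_pow]
  have hAAreal : ∀ σ τ, (μn (A σ ∩ A τ)).toReal = ε ^ (2*(n-1) - Sg σ τ) := by
    intro σ τ
    rw [hAAmeasure σ τ, ENNReal.toReal_pow]
  -- rewrite with x powers
  have hterm : ∀ σ τ, ε ^ (2*(n-1) - Sg σ τ) = ε ^ (2*(n-1)) * x ^ (Sg σ τ) := by
    intro σ τ
    have hle : Sg σ τ ≤ 2*(n-1) := le_trans (hSg_le σ τ) (by omega)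
    rw [pow_sub₀ ε (ne_of_gt hε) hle, hx', one_div, inv_pow]
  -- sum over permutations
  have hsum2 : ∀ σ, ∑ τ : Equiv.Perm (Fin n), (x:ℝ) ^ (Sg σ τ) = Phi x n := by
    intro σ
    rw [Phi]
    symm
    apply Fintype.sum_bijective (fun ρ => σ * ρ) (Group.mulLeft_bijective σ)
    intro ρ
    congr 1
    rw [hSg, agr]
    congr 1
    apply Finset.filter_congr
    intro i _
    constructor
    · intro h
      exact Eq.symm ((vert_mul n σ ρ i).mpr h)
    · intro h
      exact (vert_mul n σ ρ i).mp h.symm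
  -- apply Chung-Erdos
  have hCE := chung_erdos μn A hAmeas
  have hNfact : (0:ℝ) < (Nat.factorial n : ℝ) := by positivity
  have hcardP : (Fintype.card (Equiv.Perm (Fin n)) : ℝ) = (Nat.factorial n : ℝ) := by
    rw [Fintype.card_perm, Fintype.card_fin]
  have hS1 : ∑ σ : Equiv.Perm (Fin n), (μn (A σ)).toReal = (Nat.factorial n : ℝ) * ε ^ (n-1) := by
    rw [Finset.sum_congr rfl (fun σ _ => hAreal σ), Finset.sum_const, nsmul_eq_mul,
      Finset.card_univ, hcardP]
  have hS2 : ∑ σ : Equiv.Perm (Fin n), ∑ τ : Equiv.Perm (Fin n), (μn (A σ ∩ A τ)).toReal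
      ≤ ε ^ (2*(n-1)) * ((Nat.factorial n : ℝ) * Fb x n) := by
    have h1 : ∀ σ, ∑ τ : Equiv.Perm (Fin n), (μn (A σ ∩ A τ)).toReal
        = ε ^ (2*(n-1)) * Phi x n := by
      intro σ
      rw [Finset.sum_congr rfl (fun τ _ => by rw [hAAreal σ τ, hterm σ τ]), ← Finset.mul_sum,
        hsum2 σ]
    rw [Finset.sum_congr rfl (fun σ _ => h1 σ), Finset.sum_const, nsmul_eq_mul,
      Finset.card_univ, hcardP]
    have hPhi := Phi_le_Fb hx1 n hn
    have hpow : (0:ℝ) ≤ ε ^ (2*(n-1)) := by positivity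
    calc (Nat.factorial n : ℝ) * (ε ^ (2*(n-1)) * Phi x n)
        ≤ (Nat.factorial n : ℝ) * (ε ^ (2*(n-1)) * Fb x n) := by
          apply mul_le_mul_of_nonneg_left _ (le_of_lt hNfact)
          exact mul_le_mul_of_nonneg_left hPhi hpow
      _ = ε ^ (2*(n-1)) * ((Nat.factorial n : ℝ) * Fb x n) := by ring
  -- lower bound for the measure of the union
  have hFbpos : (0:ℝ) < Fb x n := by
    have h0 : (0:ℕ) ∈ range n := Finset.mem_range.mpr (by omega)
    have := Finset.single_le_sum (f := fun k => (4*x)^k * (Nat.factorial (n - k) : ℝ))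
      (fun k _ => by positivity) h0
    rw [Fb]
    calc (0:ℝ) < (Nat.factorial n : ℝ) := hNfact
      _ = (4*x)^0 * (Nat.factorial (n - 0) : ℝ) := by norm_num
      _ ≤ _ := this
  have hUnion : (Nat.factorial n : ℝ) / Fb x n ≤ (μn (⋃ σ, A σ)).toReal := by
    have hpowpos : (0:ℝ) < ε ^ (2*(n-1)) := by positivity
    rw [div_le_iff₀ hFbpos]
    have h2 : ((Nat.factorial n : ℝ) * ε ^ (n-1))^2
        ≤ (μn (⋃ σ, A σ)).toReal * (ε ^ (2*(n-1)) * ((Nat.factorial n : ℝ) * Fb x n)) := by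
      rw [← hS1]
      calc (∑ σ : Equiv.Perm (Fin n), (μn (A σ)).toReal)^2
          ≤ (μn (⋃ σ, A σ)).toReal * ∑ σ, ∑ τ, (μn (A σ ∩ A τ)).toReal := hCE
        _ ≤ _ := by
            apply mul_le_mul_of_nonneg_left hS2 ENNReal.toReal_nonneg
    have hsq : ((Nat.factorial n : ℝ) * ε ^ (n-1))^2
        = ((Nat.factorial n : ℝ) * (Nat.factorial n : ℝ)) * ε ^ (2*(n-1)) := by
      rw [mul_pow, ← pow_mul]
      ring_nf
    rw [hsq] at h2
    have h3 : ((Nat.factorial n : ℝ) * (Nat.factorial n : ℝ)) * ε ^ (2*(n-1))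
        ≤ ((μn (⋃ σ, A σ)).toReal * ((Nat.factorial n : ℝ) * Fb x n)) * ε ^ (2*(n-1)) := by
      calc ((Nat.factorial n : ℝ) * (Nat.factorial n : ℝ)) * ε ^ (2*(n-1)) ≤ _ := h2
        _ = ((μn (⋃ σ, A σ)).toReal * ((Nat.factorial n : ℝ) * Fb x n)) * ε ^ (2*(n-1)) := by ring
    have h4 := le_of_mul_le_mul_right (by linarith [h3] :
      ((Nat.factorial n : ℝ) * (Nat.factorial n : ℝ)) * ε ^ (2*(n-1))
        ≤ ((μn (⋃ σ, A σ)).toReal * ((Nat.factorial n : ℝ) * Fb x n)) * ε ^ (2*(n-1))) hpowpos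
    have h5 : (Nat.factorial n : ℝ) * (Nat.factorial n : ℝ)
        ≤ (Nat.factorial n : ℝ) * ((μn (⋃ σ, A σ)).toReal * Fb x n) := by
      calc (Nat.factorial n : ℝ) * (Nat.factorial n : ℝ) ≤ _ := h4
        _ = (Nat.factorial n : ℝ) * ((μn (⋃ σ, A σ)).toReal * Fb x n) := by ring
    exact le_of_mul_le_mul_left h5 hNfact
  -- final lower bound for the union measure in real terms
  have hx24 : 24 * x < n := hxn
  have h6 := Fb_le hx1 hx24
  have h7 : 1 - 24 * x / n ≤ (Nat.factorial n : ℝ) / Fb x n := by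
    rw [le_div_iff₀ hFbpos]
    exact h6
  have hr : 24 * x / n = 24 / (ε * n) := by
    rw [hx']
    field_simp
  have h8 : 1 - 24 / (ε * n) ≤ (μn (⋃ σ, A σ)).toReal := by
    rw [← hr]
    exact le_trans h7 hUnion
  -- inclusion into the accessibility event
  have hsub : (⋃ σ, A σ) ⊆ {η : (Fin n → Bool) → ℝ | ∃ P : HypercubePath n,
      ∀ (i : Fin (n + 1)) (h2 : i.1 + 1 < n), 1 ≤ i.1 →
        η (P.1 i) + cn * i.1 <
          η (P.1 ⟨i.1 + 1, Nat.lt_succ_of_lt h2⟩) + cn * (i.1 + 1)} := by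
    intro η hη
    rw [Set.mem_iUnion] at hη
    obtain ⟨σ, hησ⟩ := hη
    rw [hA, Set.mem_univ_pi] at hησ
    refine ⟨pathOfPerm n σ, ?_⟩
    intro i h2 h1
    rw [pathOfPerm_val, pathOfPerm_val]
    have hm1 : vert n σ (i : ℕ) ∈ V σ := by
      rw [hV]
      exact Finset.mem_image.mpr ⟨(i:ℕ), Finset.mem_Ico.mpr ⟨h1, by omega⟩, rfl⟩
    have hm2 : vert n σ ((i:ℕ)+1) ∈ V σ := by
      rw [hV]
      exact Finset.mem_image.mpr ⟨(i:ℕ)+1, Finset.mem_Ico.mpr ⟨by omega, h2⟩, rfl⟩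
    have hη1 := hησ (vert n σ (i : ℕ))
    have hη2 := hησ (vert n σ ((i:ℕ)+1))
    rw [if_pos hm1] at hη1
    rw [if_pos hm2] at hη2
    rw [hI, Set.mem_Ioc] at hη1 hη2
    have he : ((⟨(i:ℕ) + 1, Nat.lt_succ_of_lt h2⟩ : Fin (n+1)) : ℕ) = (i:ℕ) + 1 := rfl
    rw [he]
    push_cast
    have harith : cn * ((i:ℕ) + 1 : ℝ) = cn * (i:ℕ) + cn := by ring
    have h9 : η (vert n σ (i:ℕ)) ≤ u := hη1.2
    have h10 : l < η (vert n σ ((i:ℕ)+1)) := hη2.1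
    linarith
  calc ENNReal.ofReal (1 - 24 / (ε * n))
      ≤ ENNReal.ofReal ((μn (⋃ σ, A σ)).toReal) := ENNReal.ofReal_le_ofReal h8
    _ = μn (⋃ σ, A σ) := ENNReal.ofReal_toReal (measure_ne_top _ _)
    _ ≤ _ := measure_mono hsub

lemma Ioc_subset_union (a h : ℝ) (hh : 0 ≤ h) :
    ∀ m : ℕ, Set.Ioc a (a + m*h) ⊆ ⋃ j ∈ Finset.range m, Set.Ioc (a + j*h) (a + (j+1)*h) := by
  intro m
  induction m with
  | zero => simp
  | succ m ih =>
    have h1 : a ≤ a + m*h := by nlinarith [Nat.cast_nonneg (α := ℝ) m]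
    intro y hy
    rw [Set.mem_Ioc] at hy
    push_cast at hy
    rcases le_or_gt y (a + m*h) with hc | hc
    · have hmem : y ∈ Set.Ioc a (a + m*h) := ⟨hy.1, hc⟩
      have hin := ih hmem
      simp only [Set.mem_iUnion] at hin ⊢
      obtain ⟨j, hj, hyj⟩ := hin
      exact ⟨j, by simp at hj ⊢; omega, hyj⟩
    · simp only [Set.mem_iUnion]
      refine ⟨m, by simp, ?_⟩
      rw [Set.mem_Ioc]
      push_cast
      exact ⟨hc, hy.2⟩

lemma exists_good_interval (μF : Measure ℝ) [IsProbabilityMeasure μF]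
    (Mr : ℝ) (hMr : 1 ≤ Mr) (hM2 : (1/2 : ENNReal) ≤ μF (Set.Ioc (-Mr) Mr))
    (cn : ℝ) (hcn : 0 < cn) :
    ∃ l u : ℝ, u ≤ l + cn ∧ ∃ m : ℕ, 1 ≤ m ∧ ((m:ℝ) ≤ 2*Mr/cn + 1) ∧
      (1/(2*(m:ℝ)) ≤ (μF (Set.Ioc l u)).toReal) := by
  classical
  set m : ℕ := max 1 ⌈(2*Mr)/cn⌉₊ with hm
  have hm1 : 1 ≤ m := le_max_left _ _
  have hm0 : (0:ℝ) < m := by exact_mod_cast hm1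
  have hceil : (2*Mr)/cn ≤ (⌈(2*Mr)/cn⌉₊ : ℝ) := Nat.le_ceil _
  have hmge : (2*Mr)/cn ≤ (m:ℝ) := le_trans hceil (by exact_mod_cast Nat.le_max_right 1 _)
  have hmle : (m:ℝ) ≤ 2*Mr/cn + 1 := by
    have hnn : (0:ℝ) ≤ (2*Mr)/cn := by positivity
    have h1 : (⌈(2*Mr)/cn⌉₊ : ℝ) < (2*Mr)/cn + 1 := Nat.ceil_lt_add_one hnn
    have h2 : (1:ℝ) ≤ 2*Mr/cn + 1 := by linarith
    rw [hm]
    push_cast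
    exact max_le h2 (le_of_lt h1)
  set h : ℝ := 2*Mr/(m:ℝ) with hh'
  have hh0 : 0 < h := by positivity
  have hhcn : h ≤ cn := by
    rw [hh', div_le_iff₀ hm0]
    rw [div_le_iff₀ hcn] at hmge
    linarith
  have hcover : Set.Ioc (-Mr) Mr ⊆ ⋃ j ∈ Finset.range m, Set.Ioc (-Mr + j*h) (-Mr + (j+1)*h) := by
    have heq : -Mr + m*h = Mr := by
      rw [hh']
      field_simp
      ring
    intro y hy
    apply Ioc_subset_union (-Mr) h (le_of_lt hh0) m
    rw [Set.mem_Ioc] at hy ⊢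
    exact ⟨hy.1, by rw [heq]; exact hy.2⟩
  have hsum : (1/2 : ENNReal) ≤ ∑ j ∈ Finset.range m, μF (Set.Ioc (-Mr + j*h) (-Mr + (j+1)*h)) := by
    calc (1/2 : ENNReal) ≤ μF (Set.Ioc (-Mr) Mr) := hM2
      _ ≤ μF (⋃ j ∈ Finset.range m, Set.Ioc (-Mr + j*h) (-Mr + (j+1)*h)) := measure_mono hcover
      _ ≤ ∑ j ∈ Finset.range m, μF (Set.Ioc (-Mr + j*h) (-Mr + (j+1)*h)) :=
          measure_biUnion_finset_le _ _
  -- real version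
  have hsumR : (1/2 : ℝ) ≤ ∑ j ∈ Finset.range m, (μF (Set.Ioc (-Mr + j*h) (-Mr + (j+1)*h))).toReal := by
    have h1 : (∑ j ∈ Finset.range m, μF (Set.Ioc (-Mr + j*h) (-Mr + (j+1)*h))).toReal
        = ∑ j ∈ Finset.range m, (μF (Set.Ioc (-Mr + j*h) (-Mr + (j+1)*h))).toReal :=
      ENNReal.toReal_sum (fun j _ => measure_ne_top _ _)
    rw [← h1]
    have h2 : ((1:ENNReal)/2).toReal = (1/2 : ℝ) := by simp
    rw [← h2]
    apply ENNReal.toReal_mono _ hsum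
    exact (ENNReal.sum_lt_top.mpr (fun j _ => measure_lt_top _ _)).ne
  -- pigeonhole
  by_contra hcon
  push_neg at hcon
  have hall : ∀ j ∈ Finset.range m, (μF (Set.Ioc (-Mr + j*h) (-Mr + (j+1)*h))).toReal < 1/(2*(m:ℝ)) := by
    intro j _
    exact hcon (-Mr + j*h) (-Mr + (j+1)*h) (by push_cast; nlinarith) m hm1 hmle
  have hlt : ∑ j ∈ Finset.range m, (μF (Set.Ioc (-Mr + j*h) (-Mr + (j+1)*h))).toReal
      < ∑ _j ∈ Finset.range m, 1/(2*(m:ℝ)) := by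
    apply Finset.sum_lt_sum_of_nonempty
    · exact Finset.nonempty_range_iff.mpr (by omega)
    · exact hall
  rw [Finset.sum_const, Finset.card_range, nsmul_eq_mul] at hlt
  have : (m:ℝ) * (1/(2*(m:ℝ))) = 1/2 := by
    field_simp
  rw [this] at hlt
  linarith

end Stmt15

/-- RMF accessibility percolation on the hypercube.  Fitnesses
are `ω v = η v + c n * d v` where the `η v` are i.i.d. with an arbitrary
distribution `μF`, `d v` is the number of ones of `v` (the position of `v`
along any `0 → 1` path), and the endpoints `0` and `1` carry fitness `-∞` and
`+∞` respectively, so that a path `P` from `0` to `1` is accessible iff `ω` is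
strictly increasing along its interior vertices (positions `1, …, n-1`).  If
`c n > 0` and `n * c n → ∞`, then the probability that some directed path from
`0` to `1` is accessible tends to `1` as `n → ∞`. -/
theorem stmt15 (μF : Measure ℝ) [IsProbabilityMeasure μF]
    (c : ℕ → ℝ) (hc : ∀ n, 0 < c n)
    (hnc : Filter.Tendsto (fun n : ℕ => (n : ℝ) * c n)
      Filter.atTop Filter.atTop) :
    Filter.Tendsto
      (fun n : ℕ =>
        (Measure.pi fun _ : Fin n → Bool => μF)
          {η : (Fin n → Bool) → ℝ | ∃ P : HypercubePath n,
            ∀ (i : Fin (n + 1)) (h2 : i.1 + 1 < n), 1 ≤ i.1 →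
              η (P.1 i) + c n * i.1 <
                η (P.1 ⟨i.1 + 1, Nat.lt_succ_of_lt h2⟩) + c n * (i.1 + 1)})
      Filter.atTop (nhds 1) := by
  classical
  -- choose a big interval carrying at least half the mass
  obtain ⟨k, hk⟩ : ∃ k : ℕ, (1/2 : ENNReal) ≤ μF (Set.Ioc (-((k:ℝ)+1)) ((k:ℝ)+1)) := by
    have hmono : Monotone (fun k : ℕ => Set.Ioc (-((k:ℝ)+1)) ((k:ℝ)+1)) := by
      intro a b hab
      apply Set.Ioc_subset_Ioc
      · have : (a:ℝ) ≤ b := by exact_mod_cast hab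
        linarith
      · have : (a:ℝ) ≤ b := by exact_mod_cast hab
        linarith
    have huniv : (⋃ k : ℕ, Set.Ioc (-((k:ℝ)+1)) ((k:ℝ)+1)) = Set.univ := by
      ext y
      simp only [Set.mem_iUnion, Set.mem_univ, iff_true, Set.mem_Ioc]
      obtain ⟨k, hk⟩ := exists_nat_ge |y|
      have h1 := (abs_le.mp hk).1
      have h2 := (abs_le.mp hk).2
      exact ⟨k, by linarith, by linarith⟩
    have htend := MeasureTheory.tendsto_measure_iUnion_atTop (μ := μF) hmono
    rw [huniv, measure_univ] at htend
    have := Filter.Tendsto.eventually_const_le (by norm_num : (1/2 : ENNReal) < 1) htend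
    exact this.exists
  set Mr : ℝ := (k:ℝ) + 1 with hMr'
  have hMr : 1 ≤ Mr := by
    rw [hMr']
    have := Nat.cast_nonneg (α := ℝ) k
    linarith
  -- the error term
  set rr : ℕ → ℝ := fun n => 96*Mr/((n:ℝ) * c n) + 48/(n:ℝ) with hrr'
  have hrr0 : Tendsto rr atTop (nhds 0) := by
    have h1 : Tendsto (fun n : ℕ => 96*Mr/((n:ℝ) * c n)) atTop (nhds 0) :=
      Filter.Tendsto.div_atTop tendsto_const_nhds hnc
    have h2 : Tendsto (fun n : ℕ => 48/(n:ℝ)) atTop (nhds 0) :=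
      Filter.Tendsto.div_atTop tendsto_const_nhds tendsto_natCast_atTop_atTop
    have := h1.add h2
    simpa using this
  -- the eventual lower bound
  have hlower : ∀ᶠ n : ℕ in atTop, ENNReal.ofReal (1 - rr n)
      ≤ (Measure.pi fun _ : Fin n → Bool => μF)
          {η : (Fin n → Bool) → ℝ | ∃ P : HypercubePath n,
            ∀ (i : Fin (n + 1)) (h2 : i.1 + 1 < n), 1 ≤ i.1 →
              η (P.1 i) + c n * i.1 <
                η (P.1 ⟨i.1 + 1, Nat.lt_succ_of_lt h2⟩) + c n * (i.1 + 1)} := by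
    have hev1 : ∀ᶠ n : ℕ in atTop, 1 ≤ n := eventually_ge_atTop 1
    have hev2 : ∀ᶠ n : ℕ in atTop, rr n < 1 :=
      hrr0.eventually_lt_const (by norm_num : (0:ℝ) < 1)
    filter_upwards [hev1, hev2] with n hn1 hn2
    obtain ⟨l, u, hul, m, hm1, hmle, hεm⟩ :=
      Stmt15.exists_good_interval μF Mr hMr hk (c n) (hc n)
    set ε : ℝ := (μF (Set.Ioc l u)).toReal with hε'
    have hm0 : (0:ℝ) < m := by exact_mod_cast hm1
    have hεpos : 0 < ε := lt_of_lt_of_le (by positivity) hεm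
    have hn0 : (0:ℝ) < n := by exact_mod_cast hn1
    have hcn := hc n
    -- 1/ε ≤ 2m and m ≤ 2Mr/cn + 1 give 24/ε ≤ n * rr n
    have hinv : 1/ε ≤ 2*(m:ℝ) := by
      rw [div_le_iff₀ hεpos]
      have := mul_le_mul_of_nonneg_left hεm (by positivity : (0:ℝ) ≤ 2*(m:ℝ))
      calc (1:ℝ) = 2*(m:ℝ) * (1/(2*(m:ℝ))) := by field_simp
        _ ≤ 2*(m:ℝ) * ε := this
    have hkey : 24 * (1/ε) ≤ (n:ℝ) * rr n := by
      have h1 : (n:ℝ) * rr n = 96*Mr/(c n) + 48 := by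
        have hne : (n:ℝ) ≠ 0 := ne_of_gt hn0
        have hcne : c n ≠ 0 := ne_of_gt hcn
        rw [hrr']
        field_simp
      rw [h1]
      calc 24 * (1/ε) ≤ 24 * (2*(m:ℝ)) := by linarith
        _ ≤ 24 * (2*(2*Mr/(c n) + 1)) := by linarith
        _ = 96*Mr/(c n) + 48 := by ring
    have hxn : 24 * (1/ε) < n := by
      calc 24 * (1/ε) ≤ (n:ℝ) * rr n := hkey
        _ < (n:ℝ) * 1 := by
            apply mul_lt_mul_of_pos_left hn2 hn0
        _ = n := mul_one _
    have hcore := Stmt15.core μF n hn1 (c n) l u hul hεpos hxn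
    apply le_trans _ hcore
    apply ENNReal.ofReal_le_ofReal
    -- 1 - rr n ≤ 1 - 24/(ε n)
    have h24 : 24 / (ε * n) ≤ rr n := by
      rw [div_le_iff₀ (by positivity)]
      calc (24:ℝ) = (24 * (1/ε)) * ε := by field_simp
        _ ≤ ((n:ℝ) * rr n) * ε := by
            apply mul_le_mul_of_nonneg_right hkey (le_of_lt hεpos)
        _ = rr n * (ε * n) := by ring
    linarith
  -- squeeze
  have hone : Tendsto (fun n : ℕ => ENNReal.ofReal (1 - rr n)) atTop (nhds 1) := by
    have h1 : Tendsto (fun n : ℕ => 1 - rr n) atTop (nhds 1) := by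
      have := (tendsto_const_nhds (x := (1:ℝ)) (f := atTop (α := ℕ))).sub hrr0
      simpa using this
    have := ENNReal.tendsto_ofReal h1
    rwa [ENNReal.ofReal_one] at this
  apply tendsto_of_tendsto_of_tendsto_of_le_of_le' hone tendsto_const_nhds hlower
  apply Filter.Eventually.of_forall
  intro n
  exact prob_le_one
end

section
/- Consider the RMF model on the n-ary tree of fixed height h with the root assigned fitness −∞, other vertices assigned ω(v) = η(v) + c·d(v) with η i.i.d. with distribution F and c > 0 constant. Let C = sup_x (F(x+c) − F(x)) and let X be the number of accessible root-to-leaf paths. Then for every ε₁, ε₂ > 0 and all sufficiently large n, P(X > (1−ε₁)·(nC)^h) > 1 − ε₂. -/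
open MeasureTheory

open MeasureTheory ProbabilityTheory Finset

namespace Stmt16Aux

instance (n h : ℕ) : DecidableEq (TreeVertex n h) :=
  inferInstanceAs (DecidableEq (Σ j : Fin h, (Fin (j.1 + 1) → Fin n)))

variable {n h : ℕ}

def vert (w : Fin h → Fin n) (j : Fin h) : TreeVertex n h :=
  ⟨j, fun i => w (Fin.castLE j.isLt i)⟩

lemma vert_injective (w : Fin h → Fin n) : Function.Injective (vert w) := by
  intro a b hab
  exact congrArg Sigma.fst hab

def kk (w w' : Fin h → Fin n) : ℕ :=
  (Finset.univ.filter fun j : Fin h => vert w j = vert w' j).card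

lemma kk_le (w w' : Fin h → Fin n) : kk w w' ≤ h :=
  le_trans (Finset.card_filter_le _ _) (by simp)

lemma measure_forall_mem (μF : Measure ℝ) [IsProbabilityMeasure μF] (A : Set ℝ)
    (S : Finset (TreeVertex n h)) :
    (Measure.pi fun _ : TreeVertex n h => μF) {η | ∀ v ∈ S, η v ∈ A} = μF A ^ S.card := by
  classical
  have hset : {η : TreeVertex n h → ℝ | ∀ v ∈ S, η v ∈ A}
      = Set.pi Set.univ (fun v => if v ∈ S then A else Set.univ) := by
    ext η
    simp only [Set.mem_setOf_eq, Set.mem_pi, Set.mem_univ, forall_true_left]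
    constructor
    · intro hs v
      split_ifs with hv
      · exact hs v hv
      · exact Set.mem_univ _
    · intro hs v hv
      have := hs v
      rwa [if_pos hv] at this
  rw [hset, Measure.pi_pi]
  have : ∀ v : TreeVertex n h, μF (if v ∈ S then A else Set.univ)
      = if v ∈ S then μF A else 1 := by
    intro v; split_ifs <;> simp
  simp_rw [this]
  rw [Finset.prod_ite_mem, Finset.univ_inter, Finset.prod_const]

lemma forall_image_vert (w : Fin h → Fin n) (η : TreeVertex n h → ℝ) (A : Set ℝ) :
    (∀ v ∈ Finset.univ.image (vert w), η v ∈ A) ↔ ∀ j, η (vert w j) ∈ A := by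
  constructor
  · intro hv j
    exact hv _ (Finset.mem_image_of_mem _ (Finset.mem_univ j))
  · intro hj v hv
    obtain ⟨j, -, rfl⟩ := Finset.mem_image.1 hv
    exact hj j

lemma agree_of_lt_kk (w w' : Fin h → Fin n) (i : Fin h)
    (hi : i.1 < kk w w') : w' i = w i := by
  classical
  have hi : i.1 < (univ.filter fun j : Fin h => vert w j = vert w' j).card := hi
  set D := univ.filter fun j : Fin h => vert w j = vert w' j with hD
  have hne : D.Nonempty := Finset.card_pos.1 (by omega)
  set d := D.max' hne with hd
  have hdD : d ∈ D := D.max'_mem hne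
  have hcard : D.card ≤ d.1 + 1 := by
    have h1 : D.card ≤ (Finset.univ : Finset (Fin (d.1 + 1))).card := by
      apply Finset.card_le_card_of_injOn (fun j => (⟨min j.1 d.1, by omega⟩ : Fin (d.1 + 1)))
      · intro a _; exact Finset.mem_univ _
      · intro a ha b hb hab
        have ha'' : a.1 ≤ d.1 := Finset.le_max' D a ha
        have hb'' : b.1 ≤ d.1 := Finset.le_max' D b hb
        have hmm : min a.1 d.1 = min b.1 d.1 := congrArg Fin.val hab
        rw [Nat.min_eq_left ha'', Nat.min_eq_left hb''] at hmm
        exact Fin.ext hmm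
    simpa using h1
  have hid : i.1 ≤ d.1 := by omega
  have hveq : vert w d = vert w' d := (Finset.mem_filter.1 hdD).2
  have h2 : HEq (fun i' => w (Fin.castLE d.isLt i')) (fun i' => w' (Fin.castLE d.isLt i')) :=
    (Sigma.mk.inj_iff.1 hveq).2
  have h3 := congrFun (eq_of_heq h2) (⟨i.1, by omega⟩ : Fin (d.1 + 1))
  have h4 : Fin.castLE d.isLt (⟨i.1, by omega⟩ : Fin (d.1 + 1)) = i := by ext; rfl
  rw [h4] at h3
  exact h3.symm

def subEquiv (h j : ℕ) : {i : Fin h // j ≤ i.1} ≃ Fin (h - j) where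
  toFun i := ⟨i.1.1 - j, by have := i.1.isLt; have := i.2; omega⟩
  invFun m := ⟨⟨m.1 + j, by have := m.isLt; omega⟩, by simp⟩
  left_inv i := by
    ext
    have := i.2
    simp
    omega
  right_inv m := by
    ext
    simp

lemma card_agree_le (w : Fin h → Fin n) (j : ℕ) :
    (Finset.univ.filter fun w' : Fin h → Fin n =>
      ∀ i : Fin h, i.1 < j → w' i = w i).card ≤ n ^ (h - j) := by
  classical
  have hcard : Fintype.card ({i : Fin h // j ≤ i.1} → Fin n) = n ^ (h - j) := by
    rw [Fintype.card_fun, Fintype.card_fin, Fintype.card_congr (subEquiv h j), Fintype.card_fin]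
  calc (Finset.univ.filter fun w' : Fin h → Fin n =>
      ∀ i : Fin h, i.1 < j → w' i = w i).card
      ≤ (Finset.univ : Finset ({i : Fin h // j ≤ i.1} → Fin n)).card := by
        apply Finset.card_le_card_of_injOn (fun w' => fun i => w' i.1)
        · intro a _; exact Finset.mem_univ _
        · intro w₁ h₁ w₂ h₂ hw
          simp only [Finset.coe_filter, Set.mem_setOf_eq, Finset.mem_univ, true_and] at h₁ h₂
          funext i
          by_cases hi : i.1 < j
          · rw [h₁ i hi, h₂ i hi]
          · exact congrFun hw ⟨i, by omega⟩
    _ = n ^ (h - j) := by rw [Finset.card_univ, hcard]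


set_option maxHeartbeats 2000000 in
lemma main_bound (h n : ℕ) (hh : 1 ≤ h) (μF : Measure ℝ) [IsProbabilityMeasure μF]
    (A : Set ℝ) (hA : MeasurableSet A) (p : ℝ) (hp : (μF A).toReal = p) (hp0 : 0 < p)
    (hp1 : p ≤ 1) (hnp : 1 ≤ (n : ℝ) * p) {ε₂ s : ℝ} (hs : 0 < s) (hε₂ : 0 < ε₂)
    (hbig : (h + 1 : ℝ) < ε₂ * s ^ 2 * ((n : ℝ) * p)) (t : ℝ)
    (ht : t < (1 - s) * ((n : ℝ) ^ h * p ^ h)) :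
    1 - ε₂ < ((Measure.pi fun _ : TreeVertex n h => μF)
      {η : TreeVertex n h → ℝ |
        t < (Nat.card {w : Fin h → Fin n // ∀ j : Fin h, η (vert w j) ∈ A} : ℝ)}).toReal := by
  classical
  set μ : Measure (TreeVertex n h → ℝ) := Measure.pi fun _ : TreeVertex n h => μF with hμ
  set G : (Fin h → Fin n) → Set (TreeVertex n h → ℝ) :=
    fun w => {η | ∀ j, η (vert w j) ∈ A} with hG
  have hGm : ∀ w, MeasurableSet (G w) := by
    intro w
    have : G w = ⋂ j : Fin h, (fun η : TreeVertex n h → ℝ => η (vert w j)) ⁻¹' A := by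
      ext η; simp [hG, Set.mem_iInter]
    rw [this]
    exact MeasurableSet.iInter fun j => (measurable_pi_apply (vert w j)) hA
  set X : (TreeVertex n h → ℝ) → ℝ := fun η => ((Finset.univ.filter fun w : Fin h → Fin n =>
        ∀ j : Fin h, η (vert w j) ∈ A).card : ℝ) with hX
  have hXeq : X = fun η => ∑ w : Fin h → Fin n, (G w).indicator (fun _ => (1:ℝ)) η := by
    funext η
    show ((Finset.univ.filter fun w : Fin h → Fin n =>
        ∀ j : Fin h, η (vert w j) ∈ A).card : ℝ) = _
    rw [Finset.natCast_card_filter]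
    refine Finset.sum_congr rfl fun w _ => ?_
    rw [Set.indicator_apply]
    simp [hG]
  -- measures of the events
  have hμG : ∀ w, μ (G w) = μF A ^ h := by
    intro w
    have hset : G w = {η : TreeVertex n h → ℝ | ∀ v ∈ Finset.univ.image (vert w), η v ∈ A} := by
      ext η
      simp only [hG, Set.mem_setOf_eq]
      exact (forall_image_vert w η A).symm
    rw [hset, hμ, measure_forall_mem μF A,
      Finset.card_image_of_injective _ (vert_injective w), Finset.card_univ, Fintype.card_fin]
  have hμGG : ∀ w w', μ (G w ∩ G w') = μF A ^ (2 * h - kk w w') := by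
    intro w w'
    have hset : G w ∩ G w' = {η : TreeVertex n h → ℝ |
        ∀ v ∈ Finset.univ.image (vert w) ∪ Finset.univ.image (vert w'), η v ∈ A} := by
      ext η
      simp only [hG, Set.mem_inter_iff, Set.mem_setOf_eq, Finset.mem_union]
      rw [← forall_image_vert w η A, ← forall_image_vert w' η A]
      constructor
      · rintro ⟨h1, h2⟩ v hv
        rcases hv with hv | hv
        · exact h1 v hv
        · exact h2 v hv
      · intro hv
        exact ⟨fun v hv' => hv v (Or.inl hv'), fun v hv' => hv v (Or.inr hv')⟩
    have hinter : Finset.univ.image (vert w) ∩ Finset.univ.image (vert w')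
        = (Finset.univ.filter fun j : Fin h => vert w j = vert w' j).image (vert w) := by
      ext v
      simp only [Finset.mem_inter, Finset.mem_image, Finset.mem_filter, Finset.mem_univ, true_and]
      constructor
      · rintro ⟨⟨j, rfl⟩, ⟨j', hj'⟩⟩
        have hjj : j' = j := congrArg Sigma.fst hj'
        subst hjj
        exact ⟨j', hj'.symm, rfl⟩
      · rintro ⟨j, hj, rfl⟩
        exact ⟨⟨j, rfl⟩, ⟨j, hj.symm⟩⟩
    have hcardU : (Finset.univ.image (vert w) ∪ Finset.univ.image (vert w')).card
        = 2 * h - kk w w' := by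
      have h1 := Finset.card_union_add_card_inter (Finset.univ.image (vert w))
        (Finset.univ.image (vert w'))
      rw [hinter, Finset.card_image_of_injective _ (vert_injective w),
        Finset.card_image_of_injective _ (vert_injective w'),
        Finset.card_image_of_injective _ (vert_injective w),
        Finset.card_univ, Fintype.card_fin] at h1
      have h2 : kk w w' ≤ h := kk_le w w'
      rw [show (Finset.univ.filter fun j : Fin h => vert w j = vert w' j).card = kk w w'
        from rfl] at h1
      omega
    rw [hset, hμ, measure_forall_mem μF A, hcardU]
  -- integrability
  have hL2ind : ∀ w, MemLp ((G w).indicator fun _ => (1:ℝ)) 2 μ := fun w =>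
    memLp_indicator_const 2 (hGm w) 1 (Or.inr (measure_ne_top _ _))
  have hXL2 : MemLp X 2 μ := by
    rw [hXeq]
    exact memLp_finset_sum _ (fun w _ => hL2ind w)
  have hInt : ∀ w, Integrable ((G w).indicator fun _ => (1:ℝ)) μ := fun w =>
    (hL2ind w).integrable one_le_two
  have hInt2 : ∀ w w', Integrable (((G w ∩ G w')).indicator fun _ => (1:ℝ)) μ := fun w w' =>
    (memLp_indicator_const 2 ((hGm w).inter (hGm w')) 1
      (Or.inr (measure_ne_top _ _))).integrable one_le_two
  have hXmeas : Measurable X := by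
    rw [hXeq]
    exact Finset.measurable_sum _ (fun w _ => measurable_const.indicator (hGm w))
  -- first moment
  set m : ℝ := (n : ℝ) ^ h * p ^ h with hmdef
  have hm : μ[X] = m := by
    rw [hXeq, integral_finset_sum _ (fun w _ => hInt w)]
    have hone : ∀ w : Fin h → Fin n, ∫ η, (G w).indicator (fun _ => (1:ℝ)) η ∂μ = p ^ h := by
      intro w
      rw [integral_indicator_const (1:ℝ) (hGm w), measureReal_def, hμG w, ENNReal.toReal_pow, hp,
        smul_eq_mul, mul_one]
    rw [Finset.sum_congr rfl fun w _ => hone w, Finset.sum_const, Finset.card_univ,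
      Fintype.card_fun, Fintype.card_fin, Fintype.card_fin, nsmul_eq_mul, hmdef]
    push_cast
    ring
  -- second moment
  have hm2 : μ[X ^ 2] = ∑ w : Fin h → Fin n, ∑ w' : Fin h → Fin n, p ^ (2 * h - kk w w') := by
    have hX2eq : (X ^ 2) = fun η => ∑ w : Fin h → Fin n, ∑ w' : Fin h → Fin n,
        ((G w ∩ G w').indicator (fun _ => (1:ℝ)) η) := by
      funext η
      rw [Pi.pow_apply, hXeq, pow_two, Finset.sum_mul_sum]
      refine Finset.sum_congr rfl fun w _ => Finset.sum_congr rfl fun w' _ => ?_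
      rw [← Set.inter_indicator_mul]
      simp
    rw [hX2eq, integral_finset_sum _ (fun w _ => integrable_finset_sum _ (fun w' _ => hInt2 w w'))]
    refine Finset.sum_congr rfl fun w _ => ?_
    rw [integral_finset_sum _ (fun w' _ => hInt2 w w')]
    refine Finset.sum_congr rfl fun w' _ => ?_
    rw [integral_indicator_const (1:ℝ) ((hGm w).inter (hGm w')), measureReal_def, hμGG w w',
      ENNReal.toReal_pow, hp, smul_eq_mul, mul_one]
  -- variance formula
  have hmsq : m ^ 2 = ∑ _w : Fin h → Fin n, ∑ _w' : Fin h → Fin n, p ^ (2 * h) := by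
    rw [Finset.sum_const, Finset.sum_const, Finset.card_univ, Fintype.card_fun,
      Fintype.card_fin, Fintype.card_fin, smul_smul, nsmul_eq_mul, hmdef]
    push_cast
    rw [two_mul, pow_add]
    ring
  have hVar : ProbabilityTheory.variance X μ
      = ∑ w : Fin h → Fin n, ∑ w' : Fin h → Fin n, (p ^ (2 * h - kk w w') - p ^ (2 * h)) := by
    rw [ProbabilityTheory.variance_eq_sub hXL2, hm2, hm, hmsq, ← Finset.sum_sub_distrib]
    exact Finset.sum_congr rfl fun w _ => (Finset.sum_sub_distrib _ _).symm
  -- variance bound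
  set M : ℝ := (n : ℝ) ^ (h - 1) * p ^ (2 * h - 1) with hM
  have hM0 : 0 ≤ M := by positivity
  have hn1 : (1 : ℝ) ≤ (n : ℝ) := by nlinarith [Nat.cast_nonneg (α := ℝ) n]
  have hn0 : (0 : ℝ) < (n : ℝ) := by linarith
  have inner : ∀ w : Fin h → Fin n,
      ∑ w' : Fin h → Fin n, (p ^ (2 * h - kk w w') - p ^ (2 * h)) ≤ (h + 1) * M := by
    intro w
    refine le_trans (le_of_eq
      (Finset.sum_comp (fun j => p ^ (2 * h - j) - p ^ (2 * h)) (kk w))) ?_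
    have hterm : ∀ j ∈ Finset.univ.image (kk w),
        (Finset.univ.filter fun w' : Fin h → Fin n => kk w w' = j).card
          • (p ^ (2 * h - j) - p ^ (2 * h)) ≤ M := by
      intro j hj
      obtain ⟨w₀, -, hw₀⟩ := Finset.mem_image.1 hj
      have hjh : j ≤ h := hw₀ ▸ kk_le w w₀
      rcases Nat.eq_zero_or_pos j with rfl | hj1
      · simpa using hM0
      · have hfib : (Finset.univ.filter fun w' : Fin h → Fin n => kk w w' = j) ⊆
            Finset.univ.filter fun w' : Fin h → Fin n => ∀ i : Fin h, i.1 < j → w' i = w i := by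
          intro w' hw'
          rw [Finset.mem_filter] at hw' ⊢
          refine ⟨Finset.mem_univ _, fun i hi => ?_⟩
          exact agree_of_lt_kk w w' i (by rw [hw'.2]; exact hi)
        have hcard2 : (Finset.univ.filter fun w' : Fin h → Fin n => kk w w' = j).card
            ≤ n ^ (h - j) := le_trans (Finset.card_le_card hfib) (card_agree_le w j)
        have hg0 : 0 ≤ p ^ (2 * h - j) - p ^ (2 * h) :=
          sub_nonneg.2 (pow_le_pow_of_le_one hp0.le hp1 (by omega))
        have hg1 : p ^ (2 * h - j) - p ^ (2 * h) ≤ p ^ (2 * h - j) := by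
          nlinarith [pow_nonneg hp0.le (2 * h)]
        calc (Finset.univ.filter fun w' : Fin h → Fin n => kk w w' = j).card
              • (p ^ (2 * h - j) - p ^ (2 * h))
            ≤ ((n : ℝ) ^ (h - j)) * p ^ (2 * h - j) := by
              rw [nsmul_eq_mul]
              apply mul_le_mul _ hg1 hg0 (by positivity)
              exact_mod_cast hcard2
          _ ≤ M := by
              have e1 : h - 1 = (h - j) + (j - 1) := by omega
              have e2 : 2 * h - 1 = (2 * h - j) + (j - 1) := by omega
              rw [hM, e1, e2, pow_add, pow_add]
              calc (n : ℝ) ^ (h - j) * p ^ (2 * h - j)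
                  = ((n : ℝ) ^ (h - j) * p ^ (2 * h - j)) * 1 := by ring
                _ ≤ ((n : ℝ) ^ (h - j) * p ^ (2 * h - j)) * (((n : ℝ) * p) ^ (j - 1)) := by
                    apply mul_le_mul_of_nonneg_left (one_le_pow₀ hnp) (by positivity)
                _ = (n : ℝ) ^ (h - j) * (n : ℝ) ^ (j - 1) * (p ^ (2 * h - j) * p ^ (j - 1)) := by
                    rw [mul_pow]; ring
    calc ∑ j ∈ Finset.univ.image (kk w),
        (Finset.univ.filter fun w' : Fin h → Fin n => kk w w' = j).card
          • (p ^ (2 * h - j) - p ^ (2 * h))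
        ≤ ∑ _j ∈ Finset.univ.image (kk w), M := Finset.sum_le_sum hterm
      _ ≤ (h + 1) * M := by
          rw [Finset.sum_const, nsmul_eq_mul]
          apply mul_le_mul_of_nonneg_right _ hM0
          have hsub : Finset.univ.image (kk w) ⊆ Finset.range (h + 1) := by
            intro j hj
            obtain ⟨w₀, -, hw₀⟩ := Finset.mem_image.1 hj
            rw [Finset.mem_range]
            have := hw₀ ▸ kk_le w w₀
            omega
          calc ((Finset.univ.image (kk w)).card : ℝ)
              ≤ ((Finset.range (h + 1)).card : ℝ) := by
                exact_mod_cast Finset.card_le_card hsub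
            _ = (h : ℝ) + 1 := by simp
  have hVarle : ProbabilityTheory.variance X μ
      ≤ (h + 1) * ((n : ℝ) ^ (2 * h - 1) * p ^ (2 * h - 1)) := by
    rw [hVar]
    calc ∑ w : Fin h → Fin n, ∑ w' : Fin h → Fin n, (p ^ (2 * h - kk w w') - p ^ (2 * h))
        ≤ ∑ _w : Fin h → Fin n, ((h + 1) * M) := Finset.sum_le_sum fun w _ => inner w
      _ = (n : ℝ) ^ h * ((h + 1) * M) := by
          rw [Finset.sum_const, Finset.card_univ, Fintype.card_fun, Fintype.card_fin,
            Fintype.card_fin, nsmul_eq_mul]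
          push_cast
          ring
      _ = (h + 1) * ((n : ℝ) ^ (2 * h - 1) * p ^ (2 * h - 1)) := by
          rw [hM]
          have e : 2 * h - 1 = h + (h - 1) := by omega
          rw [e, pow_add]
          ring
  -- Chebyshev
  have hm0 : 0 < m := by
    rw [hmdef]; exact mul_pos (pow_pos hn0 h) (pow_pos hp0 h)
  have ha0 : 0 < s * m := mul_pos hs hm0
  have hcheb := ProbabilityTheory.meas_ge_le_variance_div_sq (μ := μ) hXL2 ha0
  rw [hm] at hcheb
  have hratio : ProbabilityTheory.variance X μ / (s * m) ^ 2 < ε₂ := by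
    rw [div_lt_iff₀ (by positivity)]
    calc ProbabilityTheory.variance X μ
        ≤ (h + 1) * ((n : ℝ) ^ (2 * h - 1) * p ^ (2 * h - 1)) := hVarle
      _ < (ε₂ * s ^ 2 * ((n : ℝ) * p)) * ((n : ℝ) ^ (2 * h - 1) * p ^ (2 * h - 1)) := by
          apply mul_lt_mul_of_pos_right hbig
          exact mul_pos (pow_pos hn0 _) (pow_pos hp0 _)
      _ = ε₂ * (s * m) ^ 2 := by
          rw [hmdef, mul_pow, mul_pow, ← pow_mul, ← pow_mul]
          have e3 : h * 2 = (2 * h - 1) + 1 := by omega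
          rw [e3, pow_succ, pow_succ]
          ring
  set bad : Set (TreeVertex n h → ℝ) := {η | s * m ≤ |X η - m|} with hbad
  have hbadm : MeasurableSet bad :=
    measurableSet_le measurable_const ((hXmeas.sub measurable_const).abs)
  have hsub2 : badᶜ ⊆ {η | t < X η} := by
    intro η hη
    simp only [hbad, Set.mem_compl_iff, Set.mem_setOf_eq, not_le] at hη
    have h5 := abs_lt.1 hη
    have h6 : X η > m - s * m := by linarith [h5.1]
    simp only [Set.mem_setOf_eq]
    nlinarith [ht]
  have hμmono : μ badᶜ ≤ μ {η | t < X η} := measure_mono hsub2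
  have hcompl : μ badᶜ = 1 - μ bad := prob_compl_eq_one_sub hbadm
  have hbadlt : (μ bad).toReal < ε₂ := by
    have h7 : (μ bad).toReal ≤ (ENNReal.ofReal
        (ProbabilityTheory.variance X μ / (s * m) ^ 2)).toReal :=
      ENNReal.toReal_mono ENNReal.ofReal_ne_top hcheb
    rw [ENNReal.toReal_ofReal (div_nonneg (ProbabilityTheory.variance_nonneg _ _)
      (sq_nonneg _))] at h7
    linarith
  have hXcard : ∀ η : TreeVertex n h → ℝ,
      (Nat.card {w : Fin h → Fin n // ∀ j : Fin h, η (vert w j) ∈ A} : ℝ) = X η := by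
    intro η
    rw [Nat.card_eq_fintype_card, Fintype.card_subtype]
  have hsetgoal : {η : TreeVertex n h → ℝ |
      t < (Nat.card {w : Fin h → Fin n // ∀ j : Fin h, η (vert w j) ∈ A} : ℝ)}
      = {η | t < X η} := by
    ext η
    rw [Set.mem_setOf_eq, Set.mem_setOf_eq, hXcard η]
  rw [hsetgoal]
  calc 1 - ε₂ < 1 - (μ bad).toReal := by linarith
    _ = (μ badᶜ).toReal := by
        rw [hcompl, ENNReal.toReal_sub_of_le prob_le_one ENNReal.one_ne_top, ENNReal.toReal_one]
    _ ≤ (μ {η | t < X η}).toReal := ENNReal.toReal_mono (measure_ne_top _ _) hμmono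

end Stmt16Aux

/-- RMF on the `n`-ary tree of fixed height `h`.  Non-root
vertices get i.i.d. labels `η` with distribution `μF` (with CDF `F`), the
fitness of a vertex `v` at depth `d` is `η v + c * d`, and the root has
fitness `-∞`, so a root-to-leaf path (identified with a word
`w : Fin h → Fin n` whose prefixes are the path's vertices) is accessible iff
the fitness is strictly increasing along its non-root vertices.  With
`C = sup_x (F (x+c) - F x)` and `X` the number of accessible root-to-leaf
paths: for all `ε₁, ε₂ > 0` and all sufficiently large `n`,
`P (X > (1 - ε₁) (n C)^h) > 1 - ε₂`. -/
theorem stmt16 (h : ℕ) (μF : MeasureTheory.Measure ℝ)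
    [MeasureTheory.IsProbabilityMeasure μF]
    (F : ℝ → ℝ) (hF : ∀ x, F x = (μF (Set.Iic x)).toReal)
    (c : ℝ) (hc : 0 < c) (C : ℝ) (hC : C = ⨆ x : ℝ, (F (x + c) - F x)) :
    ∀ ε₁ ε₂ : ℝ, 0 < ε₁ → 0 < ε₂ → ∀ᶠ n : ℕ in Filter.atTop,
      ((MeasureTheory.Measure.pi fun _ : TreeVertex n h => μF)
        {η : TreeVertex n h → ℝ |
          (1 - ε₁) * ((n : ℝ) * C) ^ h <
            (Nat.card {w : Fin h → Fin n //
              ∀ (j : Fin h) (hj : j.1 + 1 < h),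
                η ⟨j, fun i => w (Fin.castLE j.isLt i)⟩ + c * (j.1 + 1) <
                  η ⟨⟨j.1 + 1, hj⟩, fun i => w (Fin.castLE hj i)⟩
                    + c * (j.1 + 2)} : ℝ)}).toReal > 1 - ε₂ := by
  classical
  intro ε₁ ε₂ hε₁ hε₂
  -- increments of the CDF are measures of half-open intervals
  have hFdiff : ∀ x : ℝ, F (x + c) - F x = (μF (Set.Ioc x (x + c))).toReal := by
    intro x
    rw [hF, hF]
    have h1 : Set.Iic (x + c) = Set.Iic x ∪ Set.Ioc x (x + c) :=
      (Set.Iic_union_Ioc_eq_Iic (by linarith)).symm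
    rw [h1, measure_union (Set.Iic_disjoint_Ioc le_rfl) measurableSet_Ioc,
      ENNReal.toReal_add (measure_ne_top _ _) (measure_ne_top _ _)]
    ring
  have htole : ∀ s : Set ℝ, (μF s).toReal ≤ 1 := by
    intro s
    have h2 := ENNReal.toReal_mono (measure_ne_top μF Set.univ)
      (measure_mono (Set.subset_univ s))
    simpa using h2
  have hbdd : BddAbove (Set.range fun x => F (x + c) - F x) := by
    refine ⟨1, ?_⟩
    rintro y ⟨x, rfl⟩
    simp only
    rw [hFdiff]
    have := htole (Set.Ioc x (x + c))
    linarith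
  -- C is positive
  have hCpos : 0 < C := by
    have hex : ∃ k : ℤ, μF (Set.Ioc (k • c) ((k + 1) • c)) ≠ 0 := by
      by_contra hall
      push_neg at hall
      have h0 : μF (⋃ k : ℤ, Set.Ioc (k • c) ((k + 1) • c)) = 0 :=
        measure_iUnion_null hall
      rw [iUnion_Ioc_zsmul hc] at h0
      simp at h0
    obtain ⟨k, hk⟩ := hex
    have hk' : μF (Set.Ioc ((k : ℤ) • c) ((k : ℤ) • c + c)) ≠ 0 := by
      rwa [add_zsmul, one_zsmul] at hk
    have h2 : 0 < F ((k : ℤ) • c + c) - F ((k : ℤ) • c) := by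
      rw [hFdiff]
      exact ENNReal.toReal_pos hk' (measure_ne_top _ _)
    calc (0 : ℝ) < F ((k : ℤ) • c + c) - F ((k : ℤ) • c) := h2
      _ ≤ C := hC ▸ le_ciSup hbdd _
  -- shrink ε₁
  set ε' : ℝ := min ε₁ 2⁻¹ with hε'def
  have hε'0 : 0 < ε' := lt_min hε₁ (by norm_num)
  have hε'le : ε' ≤ ε₁ := min_le_left _ _
  have hε'half : ε' ≤ 2⁻¹ := min_le_right _ _
  set s : ℝ := ε' / 2 with hsdef
  have hs : 0 < s := by positivity
  have hsε : s < ε' := by rw [hsdef]; linarith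
  -- choose δ
  have hcont : ContinuousAt (fun δ : ℝ => (1 - s) * (C - δ) ^ h) 0 := by fun_prop
  have hlt0 : (1 - ε') * C ^ h < (1 - s) * (C - 0) ^ h := by
    rw [sub_zero]
    have hCh : 0 < C ^ h := pow_pos hCpos h
    nlinarith
  have hev : ∀ᶠ δ : ℝ in nhds 0, (1 - ε') * C ^ h < (1 - s) * (C - δ) ^ h :=
    hcont.eventually (eventually_gt_nhds hlt0)
  have hev2 : ∀ᶠ δ : ℝ in nhds 0, δ < C := eventually_lt_nhds hCpos
  obtain ⟨δ, hδ0, hδC1, hδC2⟩ := (hev.and hev2).exists_gt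
  -- choose x₀ and p
  have hlt : C - δ < ⨆ x : ℝ, (F (x + c) - F x) := by rw [← hC]; linarith
  obtain ⟨x₀, hx₀⟩ := exists_lt_of_lt_ciSup hlt
  set p : ℝ := (μF (Set.Ioc x₀ (x₀ + c))).toReal with hpdef
  have hpC : C - δ < p := by rwa [hFdiff] at hx₀
  have hp0 : 0 < p := by linarith
  have hple : p ≤ 1 := htole _
  have hkey : (1 - ε') * C ^ h < (1 - s) * p ^ h := by
    have hpow : (C - δ) ^ h ≤ p ^ h := pow_le_pow_left₀ (by linarith) hpC.le h
    have h1s : (0 : ℝ) < 1 - s := by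
      have : s ≤ 1 / 4 := by rw [hsdef]; linarith
      linarith
    calc (1 - ε') * C ^ h < (1 - s) * (C - δ) ^ h := hδC1
      _ ≤ (1 - s) * p ^ h := by nlinarith
  -- the height-0 case is trivial
  rcases Nat.eq_zero_or_pos h with rfl | hh
  · refine Filter.Eventually.of_forall fun n => ?_
    have hset : {η : TreeVertex n 0 → ℝ |
        (1 - ε₁) * ((n : ℝ) * C) ^ 0 < (Nat.card {w : Fin 0 → Fin n //
          ∀ (j : Fin 0) (hj : j.1 + 1 < 0),
            η ⟨j, fun i => w (Fin.castLE j.isLt i)⟩ + c * (j.1 + 1) <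
              η ⟨⟨j.1 + 1, hj⟩, fun i => w (Fin.castLE hj i)⟩ + c * (j.1 + 2)} : ℝ)}
        = Set.univ := by
      ext η
      simp only [Set.mem_setOf_eq, Set.mem_univ, iff_true, pow_zero, mul_one]
      have hcard1 : Nat.card {w : Fin 0 → Fin n //
          ∀ (j : Fin 0) (hj : j.1 + 1 < 0),
            η ⟨j, fun i => w (Fin.castLE j.isLt i)⟩ + c * (j.1 + 1) <
              η ⟨⟨j.1 + 1, hj⟩, fun i => w (Fin.castLE hj i)⟩ + c * (j.1 + 2)} = 1 := by
        rw [Nat.card_eq_fintype_card, Fintype.card_eq_one_iff]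
        refine ⟨⟨fun j => j.elim0, fun j => j.elim0⟩, fun y => ?_⟩
        apply Subtype.ext
        funext j
        exact j.elim0
      rw [hcard1]
      push_cast
      linarith
    rw [hset]
    simp only [measure_univ, ENNReal.toReal_one]
    linarith
  -- main case: h ≥ 1
  obtain ⟨N, hN⟩ := exists_nat_gt (max (1 / p) (((h : ℝ) + 1) / (ε₂ * s ^ 2 * p)))
  filter_upwards [Filter.eventually_ge_atTop N] with n hn
  have hnN : (N : ℝ) ≤ (n : ℝ) := Nat.cast_le.2 hn
  have hmax1 : 1 / p < (n : ℝ) := lt_of_lt_of_le (lt_of_le_of_lt (le_max_left _ _) hN) hnN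
  have hmax2 : ((h : ℝ) + 1) / (ε₂ * s ^ 2 * p) < (n : ℝ) :=
    lt_of_lt_of_le (lt_of_le_of_lt (le_max_right _ _) hN) hnN
  have hnp : 1 ≤ (n : ℝ) * p := by
    rw [div_lt_iff₀ hp0] at hmax1
    linarith
  have hbig : ((h : ℝ) + 1) < ε₂ * s ^ 2 * ((n : ℝ) * p) := by
    rw [div_lt_iff₀ (by positivity)] at hmax2
    calc ((h : ℝ) + 1) < (n : ℝ) * (ε₂ * s ^ 2 * p) := hmax2
      _ = ε₂ * s ^ 2 * ((n : ℝ) * p) := by ring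
  have hn0 : (0 : ℝ) < (n : ℝ) := by nlinarith [Nat.cast_nonneg (α := ℝ) n]
  have ht : (1 - ε') * ((n : ℝ) * C) ^ h < (1 - s) * ((n : ℝ) ^ h * p ^ h) := by
    rw [mul_pow]
    calc (1 - ε') * ((n : ℝ) ^ h * C ^ h) = (n : ℝ) ^ h * ((1 - ε') * C ^ h) := by ring
      _ < (n : ℝ) ^ h * ((1 - s) * p ^ h) :=
          mul_lt_mul_of_pos_left hkey (pow_pos hn0 h)
      _ = (1 - s) * ((n : ℝ) ^ h * p ^ h) := by ring
  have hmain := Stmt16Aux.main_bound h n hh μF (Set.Ioc x₀ (x₀ + c)) measurableSet_Ioc p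
    hpdef.symm hp0 hple hnp hs hε₂ hbig ((1 - ε') * ((n : ℝ) * C) ^ h) ht
  refine lt_of_lt_of_le hmain (ENNReal.toReal_mono (measure_ne_top _ _) (measure_mono ?_))
  intro η hη
  simp only [Set.mem_setOf_eq] at hη ⊢
  -- goodness implies accessibility
  have himp : ∀ w : Fin h → Fin n,
      (∀ j : Fin h, η (Stmt16Aux.vert w j) ∈ Set.Ioc x₀ (x₀ + c)) →
      (∀ (j : Fin h) (hj : j.1 + 1 < h),
        η ⟨j, fun i => w (Fin.castLE j.isLt i)⟩ + c * (j.1 + 1) <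
          η ⟨⟨j.1 + 1, hj⟩, fun i => w (Fin.castLE hj i)⟩ + c * (j.1 + 2)) := by
    intro w hw j hj
    have h1 : x₀ < η ⟨j, fun i => w (Fin.castLE j.isLt i)⟩ ∧
        η ⟨j, fun i => w (Fin.castLE j.isLt i)⟩ ≤ x₀ + c := hw j
    have h2 : x₀ < η ⟨⟨j.1 + 1, hj⟩, fun i => w (Fin.castLE hj i)⟩ ∧
        η ⟨⟨j.1 + 1, hj⟩, fun i => w (Fin.castLE hj i)⟩ ≤ x₀ + c := hw ⟨j.1 + 1, hj⟩
    have h3 := h1.2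
    have h4 := h2.1
    have h5 : c * ((j.1 : ℝ) + 2) = c * ((j.1 : ℝ) + 1) + c := by ring
    linarith
  have hcmono : (Nat.card {w : Fin h → Fin n //
        ∀ j : Fin h, η (Stmt16Aux.vert w j) ∈ Set.Ioc x₀ (x₀ + c)} : ℝ)
      ≤ (Nat.card {w : Fin h → Fin n //
        ∀ (j : Fin h) (hj : j.1 + 1 < h),
          η ⟨j, fun i => w (Fin.castLE j.isLt i)⟩ + c * (j.1 + 1) <
            η ⟨⟨j.1 + 1, hj⟩, fun i => w (Fin.castLE hj i)⟩ + c * (j.1 + 2)} : ℝ) := by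
    have := Nat.card_le_card_of_injective
      (f := fun ww : {w : Fin h → Fin n //
          ∀ j : Fin h, η (Stmt16Aux.vert w j) ∈ Set.Ioc x₀ (x₀ + c)} =>
        (⟨ww.1, himp ww.1 ww.2⟩ : {w : Fin h → Fin n //
          ∀ (j : Fin h) (hj : j.1 + 1 < h),
            η ⟨j, fun i => w (Fin.castLE j.isLt i)⟩ + c * (j.1 + 1) <
              η ⟨⟨j.1 + 1, hj⟩, fun i => w (Fin.castLE hj i)⟩ + c * (j.1 + 2)}))
      (by intro a b hab
          have h7 := congrArg Subtype.val hab
          exact Subtype.ext h7)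
    exact_mod_cast this
  have hscale : (1 - ε₁) * ((n : ℝ) * C) ^ h ≤ (1 - ε') * ((n : ℝ) * C) ^ h := by
    apply mul_le_mul_of_nonneg_right _ (pow_nonneg (by positivity) h)
    linarith
  linarith
end

section
/- Let F be any distribution and c > 0 with sup_x (F(x+c) − F(x)) > 0.75. Then RMF accessibility percolation occurs on the directed two-dimensional lattice 𝕃², i.e., with positive probability there is an infinite path from the origin along which ω(v) = η(v) + c·d(v) is strictly increasing, where η are i.i.d. with distribution F. -/
open MeasureTheory ProbabilityTheory

lemma bool_measure_ext (μ ν : Measure Bool)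
    (ht : μ {true} = ν {true}) (hf : μ {false} = ν {false}) : μ = ν := by
  rw [← Measure.sum_smul_dirac μ, ← Measure.sum_smul_dirac ν]
  congr 1
  funext b
  cases b
  · rw [hf]
  · rw [ht]

/-- The oriented two-dimensional lattice `𝕃²`: vertices are points of the
first quadrant `ℕ × ℕ`, with edges from `(a, b)` to `(a+1, b)` and
`(a, b+1)`. -/
def L2Edge : ℕ × ℕ → ℕ × ℕ → Prop := fun u v =>
  (v.1 = u.1 + 1 ∧ v.2 = u.2) ∨ (v.1 = u.1 ∧ v.2 = u.2 + 1)

/-- The distance from the origin in `𝕃²`. -/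
def L2dist : ℕ × ℕ → ℕ := fun v => v.1 + v.2

set_option maxHeartbeats 1000000 in
/-- RMF accessibility percolation on `𝕃²`.  Assume Liggett's
bound: for every `p > 3/4`, oriented site percolation on `𝕃²` (each vertex
open independently with probability `p`) produces an infinite open path from
the origin with positive probability.  Then for any distribution `μF` (with
CDF `F`) and any `c > 0` with `sup_x (F (x+c) - F x) > 3/4`, an i.i.d. RMF
fitness landscape `ω v = η v + c * d v` on `𝕃²` has an infinite accessible
path from the origin with positive probability. -/
theorem stmt18
    (hLiggett : ∀ (p : ENNReal) (hp1 : p ≤ 1), (3/4 : ℝ) < p.toReal →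
      ∀ (Ω' : Type) (_ : MeasurableSpace Ω') (μ' : Measure Ω')
        (_ : IsProbabilityMeasure μ') (ξ : ℕ × ℕ → Ω' → Bool),
        (∀ v, Measurable (ξ v)) →
        iIndepFun ξ μ' →
        (∀ v, μ'.map (ξ v) = (PMF.bernoulli p.toNNReal
          (by simpa using ENNReal.toNNReal_mono ENNReal.one_ne_top hp1)).toMeasure) →
        0 < μ' {ω : Ω' | ∃ γ : ℕ → ℕ × ℕ, γ 0 = (0, 0) ∧
          (∀ i, L2Edge (γ i) (γ (i + 1))) ∧ ∀ i, ξ (γ i) ω = true})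
    (μF : Measure ℝ) [IsProbabilityMeasure μF]
    (F : ℝ → ℝ) (hF : ∀ x, F x = (μF (Set.Iic x)).toReal)
    (c : ℝ) (hc : 0 < c)
    (hmass : (3/4 : ℝ) < ⨆ x : ℝ, (F (x + c) - F x))
    {Ω : Type} [MeasurableSpace Ω] (μ : Measure Ω) [IsProbabilityMeasure μ]
    (η : ℕ × ℕ → Ω → ℝ) (hηmeas : ∀ v, Measurable (η v))
    (hηindep : iIndepFun η μ)
    (hηdist : ∀ v, μ.map (η v) = μF) :
    0 < μ {ω : Ω | ∃ γ : ℕ → ℕ × ℕ, γ 0 = (0, 0) ∧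
      (∀ i, L2Edge (γ i) (γ (i + 1))) ∧
      ∀ i, η (γ i) ω + c * L2dist (γ i) <
        η (γ (i + 1)) ω + c * L2dist (γ (i + 1))} := by
  -- pick x₀ realizing sup
  obtain ⟨x₀, hx₀⟩ := exists_lt_of_lt_ciSup hmass
  set S : Set ℝ := Set.Ioc x₀ (x₀ + c) with hSdef
  have hS : MeasurableSet S := measurableSet_Ioc
  set p : ENNReal := μF S with hpdef
  have hp1 : p ≤ 1 := prob_le_one
  have hpne : μF (Set.Iic (x₀ + c)) ≠ ⊤ := measure_ne_top _ _
  have hsubset : Set.Iic x₀ ⊆ Set.Iic (x₀ + c) := Set.Iic_subset_Iic.2 (by linarith)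
  have hpval : p = μF (Set.Iic (x₀ + c)) - μF (Set.Iic x₀) := by
    rw [hpdef, hSdef, ← Set.Iic_sdiff_Iic,
      measure_diff hsubset measurableSet_Iic.nullMeasurableSet (measure_ne_top _ _)]
  have hptoReal : p.toReal = F (x₀ + c) - F x₀ := by
    rw [hpval, ENNReal.toReal_sub_of_le (measure_mono hsubset) hpne, hF, hF]
  have hpgt : (3/4 : ℝ) < p.toReal := by rw [hptoReal]; exact hx₀
  -- the coupled site-percolation field
  set ξ : ℕ × ℕ → Ω → Bool := fun v ω => if η v ω ∈ S then true else false with hξdef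
  have hξmeas : ∀ v, Measurable (ξ v) := by
    intro v
    exact Measurable.ite ((hηmeas v) hS) measurable_const measurable_const
  have hξindep : iIndepFun ξ μ := by
    have : ξ = fun v => (fun x : ℝ => if x ∈ S then true else false) ∘ η v := rfl
    rw [this]
    exact hηindep.comp _ fun v =>
      Measurable.ite hS measurable_const measurable_const
  have hξtrue : ∀ v, ξ v ⁻¹' {true} = η v ⁻¹' S := by
    intro v; ext ω; simp [hξdef]
  have hξfalse : ∀ v, ξ v ⁻¹' {false} = η v ⁻¹' Sᶜ := by
    intro v; ext ω; simp [hξdef]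
  have hμS : ∀ v, μ (η v ⁻¹' S) = p := by
    intro v
    rw [hpdef, ← hηdist v, Measure.map_apply (hηmeas v) hS]
  have hξdist : ∀ v, μ.map (ξ v) = (PMF.bernoulli p.toNNReal
      (by simpa using ENNReal.toNNReal_mono ENNReal.one_ne_top hp1)).toMeasure := by
    intro v
    apply bool_measure_ext
    · rw [Measure.map_apply (hξmeas v) (measurableSet_singleton _), hξtrue, hμS,
        PMF.toMeasure_apply_singleton _ _ (measurableSet_singleton _)]
      refine Eq.trans ?_ (PMF.bernoulli_apply _ true).symm
      simp [ENNReal.coe_toNNReal (show p ≠ ⊤ from measure_ne_top _ _)]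
    · rw [Measure.map_apply (hξmeas v) (measurableSet_singleton _), hξfalse,
        PMF.toMeasure_apply_singleton _ _ (measurableSet_singleton _)]
      refine Eq.trans ?_ (PMF.bernoulli_apply _ false).symm
      rw [Set.preimage_compl, measure_compl ((hηmeas v) hS) (measure_ne_top _ _),
        hμS, measure_univ]
      simp [ENNReal.coe_toNNReal (show p ≠ ⊤ from measure_ne_top _ _)]
  have hperc := hLiggett p hp1 hpgt Ω inferInstance μ inferInstance ξ hξmeas hξindep hξdist
  refine lt_of_lt_of_le hperc (measure_mono ?_)
  rintro ω ⟨γ, hγ0, hγE, hγopen⟩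
  refine ⟨γ, hγ0, hγE, fun i => ?_⟩
  have hmem : ∀ j, η (γ j) ω ∈ S := by
    intro j
    have := hγopen j
    by_contra h
    simp [hξdef, h] at this
  have h1 := hmem i
  have h2 := hmem (i + 1)
  have hd : L2dist (γ (i + 1)) = L2dist (γ i) + 1 := by
    rcases hγE i with ⟨h, h'⟩ | ⟨h, h'⟩ <;> simp [L2dist, h, h'] <;> omega
  rw [hd]
  have hle : η (γ i) ω ≤ x₀ + c := h1.2
  have hgt : x₀ < η (γ (i + 1)) ω := h2.1
  push_cast
  nlinarith
end
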